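/- arXiv:1705.09628 — 7 statements merged into one kernel-verified Lean document; each statement's English description precedes it below -/
import Mathlib

section
/- Let ρ be a nonsingular d×d density matrix, G a Hermitian d×d matrix, and α > 0. Then ρ_G(α) is the unique minimizer over the set D of density matrices of the function F(σ) := Re⟨G, σ − ρ⟩ + α⁻¹ D(σ, ρ); that is, ρ_G(α) ∈ D, and for every density matrix σ with σ ≠ ρ_G(α) one has F(ρ_G(α)) < F(σ). -/
open scoped Matrix ComplexOrder

noncomputable section

/-- The space of `d × d` complex matrices. -/
abbrev Mat (d : ℕ) := Matrix (Fin d) (Fin d) ℂ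

/-- Matrix exponential of a Hermitian matrix, via the real continuous functional calculus
(i.e. the functional calculus on the eigenvalues). -/
noncomputable def mexp {d : ℕ} (A : Mat d) : Mat d := cfc Real.exp A

/-- Matrix logarithm of a positive definite Hermitian matrix, via the real continuous
functional calculus. -/
noncomputable def mlog {d : ℕ} (A : Mat d) : Mat d := cfc Real.log A

/-- A density matrix: Hermitian, positive semidefinite, trace one. -/
def IsDensity {d : ℕ} (ρ : Mat d) : Prop := ρ.PosSemidef ∧ ρ.trace = 1

/-- The real part of the Hilbert–Schmidt inner product `tr (Xᴴ Y)` (which is real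
when `X` and `Y` are Hermitian). -/
noncomputable def hsInner {d : ℕ} (X Y : Mat d) : ℝ := (Matrix.trace (Xᴴ * Y)).re

/-- `tr (σ log σ) = ∑ᵢ λᵢ log λᵢ` over the eigenvalues of `σ` (the convention
`0 log 0 = 0` matches `Real.log 0 = 0`), via the functional calculus for `x ↦ x log x`. -/
noncomputable def trEnt {d : ℕ} (σ : Mat d) : ℝ :=
  (Matrix.trace (cfc (fun x : ℝ => x * Real.log x) σ)).re

/-- The quantum relative entropy `D(σ, ρ) = tr (σ log σ) - tr (σ log ρ)` (for `σ` a
density matrix and `ρ` a nonsingular density matrix). -/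
noncomputable def qRelEnt {d : ℕ} (σ ρ : Mat d) : ℝ :=
  trEnt σ - (Matrix.trace (σ * mlog ρ)).re

/-- The exponentiated-gradient step `ρ_G(α) = c⁻¹ exp (log ρ - α G)` where
`c = tr exp (log ρ - α G)`. -/
noncomputable def egStep {d : ℕ} (ρ G : Mat d) (α : ℝ) : Mat d :=
  (Matrix.trace (mexp (mlog ρ - α • G)))⁻¹ • mexp (mlog ρ - α • G)

private lemma contOn_finite {s : Set ℝ} (hs : s.Finite) (f : ℝ → ℝ) : ContinuousOn f s := by
  have := hs.to_subtype
  have : DiscreteTopology s := inferInstance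
  rw [continuousOn_iff_continuous_restrict]
  exact continuous_of_discreteTopology

private lemma contOnSpec {d : ℕ} (A : Mat d) (f : ℝ → ℝ) : ContinuousOn f (spectrum ℝ A) :=
  contOn_finite Matrix.finite_real_spectrum f

private lemma contOnImg {d : ℕ} (A : Mat d) (f g : ℝ → ℝ) :
    ContinuousOn f (g '' spectrum ℝ A) :=
  contOn_finite (Matrix.finite_real_spectrum.image g) f

private lemma cfc_isHermitian {d : ℕ} (A : Mat d) (f : ℝ → ℝ) : (cfc f A).IsHermitian :=
  cfc_predicate f A

private lemma trace_cfc' {d : ℕ} {A : Mat d} (hA : A.IsHermitian) (f : ℝ → ℝ) :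
    Matrix.trace (cfc f A) = ((∑ i, f (hA.eigenvalues i) : ℝ) : ℂ) := by
  rw [hA.cfc_eq, Matrix.IsHermitian.cfc, Unitary.conjStarAlgAut_apply, Matrix.trace_mul_cycle]
  rw [Matrix.mem_unitaryGroup_iff'.mp (Matrix.IsHermitian.eigenvectorUnitary hA).2]
  rw [one_mul, Matrix.trace_diagonal]
  push_cast
  rfl

private lemma posDef_conj {d : ℕ} {U D : Mat d} (hU : U ∈ Matrix.unitaryGroup (Fin d) ℂ)
    (hD : D.PosDef) : (U * D * star U).PosDef := by
  have hH : (U * D * star U).IsHermitian := by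
    unfold Matrix.IsHermitian
    rw [Matrix.conjTranspose_mul, Matrix.conjTranspose_mul, hD.1.eq]
    simp [Matrix.star_eq_conjTranspose, mul_assoc]
  refine Matrix.PosDef.of_dotProduct_mulVec_pos hH fun x hx => ?_
  have hy : (star U) *ᵥ x ≠ 0 := by
    intro h
    apply hx
    have := congrArg (U *ᵥ ·) h
    simpa [Matrix.mulVec_mulVec, Matrix.mem_unitaryGroup_iff.mp hU] using this
  have key : star x ⬝ᵥ (U * D * star U) *ᵥ x
      = star ((star U) *ᵥ x) ⬝ᵥ D *ᵥ ((star U) *ᵥ x) := by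
    rw [Matrix.star_mulVec, show (star U)ᴴ = U from star_star U, ← Matrix.dotProduct_mulVec]
    simp [Matrix.mulVec_mulVec, mul_assoc]
  rw [key]
  exact hD.dotProduct_mulVec_pos hy

private lemma cfc_posDef {d : ℕ} {A : Mat d} (hA : A.IsHermitian) (f : ℝ → ℝ)
    (hf : ∀ i, 0 < f (hA.eigenvalues i)) : (cfc f A).PosDef := by
  rw [hA.cfc_eq, Matrix.IsHermitian.cfc]
  exact posDef_conj (hA.eigenvectorUnitary).2
    (Matrix.PosDef.diagonal fun i => by simpa using hf i)

private lemma qRelEnt_self {d : ℕ} {τ : Mat d} (hτ : τ.IsHermitian) : qRelEnt τ τ = 0 := by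
  unfold qRelEnt trEnt mlog
  have : cfc (fun x : ℝ => x * Real.log x) τ = τ * cfc Real.log τ := by
    rw [cfc_mul (fun x : ℝ => x) Real.log τ (contOnSpec τ _) (contOnSpec τ _),
      cfc_id' ℝ τ hτ.isSelfAdjoint]
  rw [this]
  ring

private lemma trace_mul_cfc {d : ℕ} {A B : Mat d} (hA : A.IsHermitian) (hB : B.IsHermitian)
    (g : ℝ → ℝ) :
    Matrix.trace (A * cfc g B) =
      ((∑ i, ∑ j, hA.eigenvalues i * g (hB.eigenvalues j) *
        Complex.normSq ((star (hA.eigenvectorUnitary : Mat d) *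
          (hB.eigenvectorUnitary : Mat d)) i j) : ℝ) : ℂ) := by
  set U : Mat d := (hA.eigenvectorUnitary : Mat d) with hU
  set V : Mat d := (hB.eigenvectorUnitary : Mat d) with hV
  set W : Mat d := star U * V with hW
  set Dp : Mat d := Matrix.diagonal ((fun x : ℝ => (x : ℂ)) ∘ hA.eigenvalues) with hDp
  set Dg : Mat d := Matrix.diagonal ((fun x : ℝ => (x : ℂ)) ∘ g ∘ hB.eigenvalues) with hDg
  have assoc1 : (U * Matrix.diagonal (RCLike.ofReal ∘ hA.eigenvalues) * star U) *
      (V * Matrix.diagonal (RCLike.ofReal ∘ g ∘ hB.eigenvalues) * star V)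
      = U * (Dp * (star U * (V * (Dg * star V)))) := by
    simp only [hDp, hDg, mul_assoc]
    rfl
  have step1 : Matrix.trace (A * cfc g B) = Matrix.trace (Dp * (W * (Dg * star W))) := by
    conv_lhs => rw [hA.spectral_theorem, hB.cfc_eq, Matrix.IsHermitian.cfc]
    simp only [Unitary.conjStarAlgAut_apply]
    rw [assoc1, Matrix.trace_mul_comm, hW]
    simp only [star_mul, star_star]
    simp only [mul_assoc]
  rw [step1, Matrix.trace]
  push_cast
  refine Finset.sum_congr rfl fun i _ => ?_
  rw [Matrix.diag_apply, hDp, Matrix.diagonal_mul, Matrix.mul_apply, Finset.mul_sum]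
  refine Finset.sum_congr rfl fun j _ => ?_
  rw [hDg, Matrix.diagonal_mul, Matrix.star_apply]
  have hc : W i j * star (W i j) = (Complex.normSq (W i j) : ℂ) := by
    rw [Complex.star_def, Complex.mul_conj]
  simp only [Function.comp_apply]
  linear_combination ((hA.eigenvalues i : ℂ) * (g (hB.eigenvalues j) : ℂ)) * hc

private lemma key_le {x y : ℝ} (hx : 0 ≤ x) (hy : 0 < y) :
    x - y ≤ x * Real.log x - x * Real.log y := by
  rcases eq_or_lt_of_le hx with h | h
  · rw [← h]; simp; linarith
  · have h2 := Real.log_le_sub_one_of_pos (show 0 < y / x by positivity)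
    rw [Real.log_div hy.ne' h.ne'] at h2
    have h3 := mul_le_mul_of_nonneg_left h2 h.le
    have h4 : x * (y / x) = y := by field_simp
    rw [mul_sub, mul_sub, h4] at h3
    linarith

private lemma key_eq {x y : ℝ} (hx : 0 ≤ x) (hy : 0 < y)
    (h : x * Real.log x - x * Real.log y = x - y) : x = y := by
  rcases eq_or_lt_of_le hx with h0 | h0
  · exfalso; rw [← h0] at h; simp at h; linarith
  · by_contra hne
    have hne' : y / x ≠ 1 := by
      intro hc
      exact hne (by field_simp at hc; linarith)
    have h2 := Real.log_lt_sub_one_of_pos (show 0 < y / x by positivity) hne'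
    rw [Real.log_div hy.ne' h0.ne'] at h2
    have h3 := mul_lt_mul_of_pos_left h2 h0
    have h4 : x * (y / x) = y := by field_simp
    rw [mul_sub, mul_sub, h4] at h3
    linarith
private lemma klein_aux {d : ℕ} (p q : Fin d → ℝ) (W : Matrix (Fin d) (Fin d) ℂ)
    (hp : ∀ i, 0 ≤ p i) (hq : ∀ j, 0 < q j)
    (row : ∀ i, ∑ j, Complex.normSq (W i j) = 1)
    (col : ∀ j, ∑ i, Complex.normSq (W i j) = 1)
    (sum_p : ∑ i, p i = 1) (sum_q : ∑ j, q j = 1)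
    (hne : Matrix.diagonal (fun i => (p i : ℂ)) * W ≠ W * Matrix.diagonal (fun j => (q j : ℂ))) :
    ∑ i, ∑ j, p i * Real.log (q j) * Complex.normSq (W i j) < ∑ i, p i * Real.log (p i) := by
  set P : Fin d → Fin d → ℝ := fun i j => Complex.normSq (W i j) with hP
  have hPnn : ∀ i j, 0 ≤ P i j := fun i j => Complex.normSq_nonneg _
  have hterm : ∀ i j, P i j * (p i - q j) ≤
      P i j * (p i * Real.log (p i) - p i * Real.log (q j)) :=
    fun i j => mul_le_mul_of_nonneg_left (key_le (hp i) (hq j)) (hPnn i j)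
  have hex : ∃ x : Fin d × Fin d, P x.1 x.2 * (p x.1 - q x.2) <
      P x.1 x.2 * (p x.1 * Real.log (p x.1) - p x.1 * Real.log (q x.2)) := by
    by_contra hc
    push_neg at hc
    apply hne
    ext i j
    rw [Matrix.diagonal_mul, Matrix.mul_diagonal]
    rcases eq_or_ne (P i j) 0 with h0 | h0
    · have hw : W i j = 0 := Complex.normSq_eq_zero.mp h0
      rw [hw]; simp
    · have heq0 : P i j * (p i - q j) =
          P i j * (p i * Real.log (p i) - p i * Real.log (q j)) :=
        le_antisymm (hterm i j) (hc (i, j))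
      have heq2 : p i * Real.log (p i) - p i * Real.log (q j) = p i - q j :=
        (mul_left_cancel₀ h0 heq0).symm
      rw [key_eq (hp i) (hq j) heq2]
      exact mul_comm _ _
  have sumlt : ∑ x : Fin d × Fin d, P x.1 x.2 * (p x.1 - q x.2)
      < ∑ x : Fin d × Fin d,
        P x.1 x.2 * (p x.1 * Real.log (p x.1) - p x.1 * Real.log (q x.2)) := by
    obtain ⟨x0, hx0⟩ := hex
    exact Finset.sum_lt_sum (fun x _ => hterm x.1 x.2) ⟨x0, Finset.mem_univ _, hx0⟩
  have zero_eq : ∑ x : Fin d × Fin d, P x.1 x.2 * (p x.1 - q x.2) = 0 := by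
    rw [Fintype.sum_prod_type]
    have e1 : ∑ i, ∑ j, P i j * p i = 1 := by
      have : ∀ i, ∑ j, P i j * p i = p i := fun i => by
        rw [← Finset.sum_mul, row i, one_mul]
      simp only [this, sum_p]
    have e2 : ∑ i, ∑ j, P i j * q j = 1 := by
      rw [Finset.sum_comm]
      have : ∀ j, ∑ i, P i j * q j = q j := fun j => by
        rw [← Finset.sum_mul, col j, one_mul]
      simp only [this, sum_q]
    simp only [mul_sub, Finset.sum_sub_distrib]
    rw [e1, e2, sub_self]
  have expand : ∑ x : Fin d × Fin d,
      P x.1 x.2 * (p x.1 * Real.log (p x.1) - p x.1 * Real.log (q x.2))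
      = ∑ i, p i * Real.log (p i) - ∑ i, ∑ j, p i * Real.log (q j) * P i j := by
    rw [Fintype.sum_prod_type]
    simp only [mul_sub, Finset.sum_sub_distrib]
    congr 1
    · refine Finset.sum_congr rfl fun i _ => ?_
      rw [← Finset.sum_mul, row i, one_mul]
    · refine Finset.sum_congr rfl fun i _ => Finset.sum_congr rfl fun j _ => by ring
  have := zero_eq ▸ sumlt
  rw [expand] at this
  linarith

private lemma klein {d : ℕ} {σ τ : Mat d} (hσ : σ.PosSemidef) (hσ1 : σ.trace = 1)
    (hτ : τ.PosDef) (hτ1 : τ.trace = 1) (hne : σ ≠ τ) : 0 < qRelEnt σ τ := by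
  have hσH : σ.IsHermitian := hσ.1
  have hτH : τ.IsHermitian := hτ.1
  set U : Mat d := (hσH.eigenvectorUnitary : Mat d) with hU
  set V : Mat d := (hτH.eigenvectorUnitary : Mat d) with hV
  set W : Mat d := star U * V with hW
  have hUmem := hσH.eigenvectorUnitary.2
  have hVmem := hτH.eigenvectorUnitary.2
  have hWW : W * star W = 1 := by
    rw [hW]
    simp only [star_mul, star_star]
    calc star U * V * (star V * U) = star U * (V * star V) * U := by
          simp only [mul_assoc]
      _ = 1 := by
          rw [Matrix.mem_unitaryGroup_iff.mp hVmem, mul_one,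
            Matrix.mem_unitaryGroup_iff'.mp hUmem]
  have hW'W : star W * W = 1 := by
    rw [hW]
    simp only [star_mul, star_star]
    calc star V * U * (star U * V) = star V * (U * star U) * V := by
          simp only [mul_assoc]
      _ = 1 := by
          rw [Matrix.mem_unitaryGroup_iff.mp hUmem, mul_one,
            Matrix.mem_unitaryGroup_iff'.mp hVmem]
  have row : ∀ i, ∑ j, Complex.normSq (W i j) = 1 := by
    intro i
    have h1 : ((∑ j, Complex.normSq (W i j) : ℝ) : ℂ) = (1 : Mat d) i i := by
      rw [← hWW, Matrix.mul_apply]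
      push_cast
      refine Finset.sum_congr rfl fun j _ => ?_
      rw [Matrix.star_apply, Complex.star_def, Complex.mul_conj]
    rw [Matrix.one_apply_eq] at h1
    exact_mod_cast h1
  have col : ∀ j, ∑ i, Complex.normSq (W i j) = 1 := by
    intro j
    have h1 : ((∑ i, Complex.normSq (W i j) : ℝ) : ℂ) = (1 : Mat d) j j := by
      rw [← hW'W, Matrix.mul_apply]
      push_cast
      refine Finset.sum_congr rfl fun i _ => ?_
      rw [Matrix.star_apply, Complex.star_def, mul_comm, Complex.mul_conj]
    rw [Matrix.one_apply_eq] at h1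
    exact_mod_cast h1
  have sum_p : ∑ i, hσH.eigenvalues i = 1 := by
    have h1 := trace_cfc' hσH (fun x => x)
    rw [cfc_id' ℝ σ hσH.isSelfAdjoint, hσ1] at h1
    exact_mod_cast h1.symm
  have sum_q : ∑ j, hτH.eigenvalues j = 1 := by
    have h1 := trace_cfc' hτH (fun x => x)
    rw [cfc_id' ℝ τ hτH.isSelfAdjoint, hτ1] at h1
    exact_mod_cast h1.symm
  have hent : trEnt σ = ∑ i, hσH.eigenvalues i * Real.log (hσH.eigenvalues i) := by
    unfold trEnt
    rw [trace_cfc' hσH]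
    exact Complex.ofReal_re _
  have tr2 : (Matrix.trace (σ * mlog τ)).re
      = ∑ i, ∑ j, hσH.eigenvalues i * Real.log (hτH.eigenvalues j) * Complex.normSq (W i j) := by
    unfold mlog
    rw [trace_mul_cfc hσH hτH]
    exact Complex.ofReal_re _
  have hDWne : Matrix.diagonal (fun i => (hσH.eigenvalues i : ℂ)) * W ≠
      W * Matrix.diagonal (fun j => (hτH.eigenvalues j : ℂ)) := by
    intro hDW
    apply hne
    have h5 : σ * V = V * Matrix.diagonal (fun j => (hτH.eigenvalues j : ℂ)) := by
      conv_lhs => rw [hσH.spectral_theorem]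
      have e0 : Matrix.diagonal (RCLike.ofReal ∘ hσH.eigenvalues)
          = Matrix.diagonal (fun i => (hσH.eigenvalues i : ℂ)) := rfl
      calc (U * Matrix.diagonal (RCLike.ofReal ∘ hσH.eigenvalues) * star U) * V
          = U * (Matrix.diagonal (fun i => (hσH.eigenvalues i : ℂ)) * W) := by
            rw [hW, e0]; simp only [mul_assoc]
        _ = U * (W * Matrix.diagonal (fun j => (hτH.eigenvalues j : ℂ))) := by rw [hDW]
        _ = (U * star U) * (V * Matrix.diagonal (fun j => (hτH.eigenvalues j : ℂ))) := by
            rw [hW]; simp only [mul_assoc]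
        _ = V * Matrix.diagonal (fun j => (hτH.eigenvalues j : ℂ)) := by
            rw [Matrix.mem_unitaryGroup_iff.mp hUmem, one_mul]
    calc σ = σ * (V * star V) := by
          rw [Matrix.mem_unitaryGroup_iff.mp hVmem, mul_one]
      _ = (σ * V) * star V := by rw [mul_assoc]
      _ = V * Matrix.diagonal (fun j => (hτH.eigenvalues j : ℂ)) * star V := by rw [h5]
      _ = τ := by
          conv_rhs => rw [hτH.spectral_theorem]
          rfl
  have main := klein_aux hσH.eigenvalues hτH.eigenvalues W hσ.eigenvalues_nonneg
    hτ.eigenvalues_pos row col sum_p sum_q hDWne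
  unfold qRelEnt
  rw [hent, tr2]
  linarith

/-- `ρ_G(α)` is the unique minimizer over the density matrices of
`F(σ) = Re⟨G, σ - ρ⟩ + α⁻¹ D(σ, ρ)`. -/
theorem stmt_0 {d : ℕ} (hd : 0 < d) (ρ G : Mat d) (hρ : ρ.PosDef) (hρ1 : ρ.trace = 1)
    (hG : G.IsHermitian) (α : ℝ) (hα : 0 < α) :
    IsDensity (egStep ρ G α) ∧
      ∀ σ : Mat d, IsDensity σ → σ ≠ egStep ρ G α →
        hsInner G (egStep ρ G α - ρ) + α⁻¹ * qRelEnt (egStep ρ G α) ρ <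
          hsInner G (σ - ρ) + α⁻¹ * qRelEnt σ ρ := by
  have : Nonempty (Fin d) := ⟨⟨0, hd⟩⟩
  have hB : (mlog ρ - α • G).IsHermitian :=
    ((cfc_isHermitian ρ Real.log).isSelfAdjoint.sub ((IsSelfAdjoint.all α).smul hG.isSelfAdjoint))
  set B : Mat d := mlog ρ - α • G with hBdef
  set t : ℝ := ∑ i, Real.exp (hB.eigenvalues i) with htdef
  have ht : 0 < t := Finset.sum_pos (fun i _ => Real.exp_pos _) Finset.univ_nonempty
  have htr : Matrix.trace (mexp B) = (t : ℂ) := trace_cfc' hB Real.exp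
  have htne : (t : ℂ) ≠ 0 := by exact_mod_cast ht.ne'
  have key1 : egStep ρ G α = cfc (fun x => t⁻¹ * Real.exp x) B := by
    unfold egStep
    rw [← hBdef, htr, cfc_const_mul t⁻¹ Real.exp B (contOnSpec _ _),
      ← Complex.ofReal_inv, ← Complex.coe_algebraMap, algebraMap_smul]
    rfl
  have hEgPos : (egStep ρ G α).PosDef := by
    rw [key1]
    exact cfc_posDef hB _ (fun i => by positivity)
  have hEgTr : (egStep ρ G α).trace = 1 := by
    unfold egStep
    rw [← hBdef, Matrix.trace_smul, htr, smul_eq_mul, inv_mul_cancel₀ htne]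
  have key2 : mlog (egStep ρ G α) = mlog ρ - α • G - Real.log t • 1 := by
    rw [key1]
    unfold mlog
    rw [← cfc_comp' Real.log (fun x => t⁻¹ * Real.exp x) B (contOnImg _ _ _)
      (contOnSpec _ _) hB.isSelfAdjoint]
    have hfun : (fun x => Real.log (t⁻¹ * Real.exp x)) = fun x => x - Real.log t := by
      funext x
      rw [Real.log_mul (inv_ne_zero ht.ne') (Real.exp_ne_zero x), Real.log_exp, Real.log_inv]
      ring
    rw [show (Real.log <| (fun x => t⁻¹ * Real.exp x) ·) = fun x => x - Real.log t from hfun]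
    rw [cfc_sub (fun x : ℝ => x) (fun _ => Real.log t) B (contOnSpec _ _) (contOnSpec _ _),
      cfc_id' ℝ B hB.isSelfAdjoint, cfc_const (Real.log t) B hB.isSelfAdjoint,
      Algebra.algebraMap_eq_smul_one, hBdef]
    rfl
  refine ⟨⟨hEgPos.posSemidef, hEgTr⟩, fun σ hσ hneq => ?_⟩
  -- the identity F(τ) = α⁻¹ * qRelEnt τ ρ* - α⁻¹ * log t - Re tr(G ρ)
  have identity : ∀ τ : Mat d, τ.trace = 1 →
      hsInner G (τ - ρ) + α⁻¹ * qRelEnt τ ρ =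
        α⁻¹ * qRelEnt τ (egStep ρ G α) - α⁻¹ * Real.log t - (Matrix.trace (G * ρ)).re := by
    intro τ hτ1
    have e1 : Matrix.trace (τ * mlog (egStep ρ G α)) =
        Matrix.trace (τ * mlog ρ) - (α : ℂ) * Matrix.trace (τ * G) - (Real.log t : ℂ) := by
      rw [key2]
      rw [mul_sub, mul_sub, Matrix.trace_sub, Matrix.trace_sub]
      congr 1
      · congr 1
        rw [mul_smul_comm, Matrix.trace_smul, Algebra.smul_def, Complex.coe_algebraMap]
      · rw [mul_smul_comm, mul_one, Matrix.trace_smul, hτ1, Complex.real_smul, mul_one]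
    have e2 : (Matrix.trace (τ * mlog (egStep ρ G α))).re =
        (Matrix.trace (τ * mlog ρ)).re - α * (Matrix.trace (τ * G)).re - Real.log t := by
      rw [e1]
      simp [Complex.sub_re, Complex.mul_re]
    have e3 : (Matrix.trace (τ * G)).re = (Matrix.trace (G * τ)).re := by
      rw [Matrix.trace_mul_comm]
    have e4 : hsInner G (τ - ρ) = (Matrix.trace (G * τ)).re - (Matrix.trace (G * ρ)).re := by
      unfold hsInner
      rw [hG.eq, mul_sub, Matrix.trace_sub, Complex.sub_re]
    unfold qRelEnt
    rw [e2, e4, e3]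
    field_simp
    ring
  have hq1 := identity σ hσ.2
  have hq2 := identity (egStep ρ G α) hEgTr
  rw [hq1, hq2, qRelEnt_self hEgPos.isHermitian]
  have hKlein : 0 < qRelEnt σ (egStep ρ G α) :=
    klein hσ.1 hσ.2 hEgPos hEgTr hneq
  have : 0 < α⁻¹ := inv_pos.mpr hα
  nlinarith

end
end

section
/- Let ρ be a nonsingular d×d density matrix, G a Hermitian d×d matrix, and α > 0. Then Re⟨G, ρ_G(α) − ρ⟩ ≤ − D(ρ_G(α), ρ) / α. -/
open scoped Matrix ComplexOrder

noncomputable section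

namespace QHelpers

open Matrix

variable {d : ℕ}

lemma contOn_fin {s : Set ℝ} (hs : s.Finite) (f : ℝ → ℝ) : ContinuousOn f s := by
  have := hs.to_subtype
  rw [continuousOn_iff_continuous_restrict]
  exact continuous_of_discreteTopology

lemma contOn (f : ℝ → ℝ) (A : Mat d) : ContinuousOn f (spectrum ℝ A) :=
  contOn_fin (Matrix.finite_real_spectrum (A := A)) f

lemma trace_hcfc {A : Mat d} (hA : A.IsHermitian) (f : ℝ → ℝ) :
    (hA.cfc f).trace = ((∑ i, f (hA.eigenvalues i) : ℝ) : ℂ) := by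
  rw [Matrix.IsHermitian.cfc, Unitary.conjStarAlgAut_apply, trace_mul_cycle, Unitary.coe_star_mul_self, one_mul, trace_diagonal]
  push_cast
  rfl

lemma trace_hcfc_mul_hcfc {A B : Mat d} (hA : A.IsHermitian) (hB : B.IsHermitian) (f g : ℝ → ℝ) :
    ((hA.cfc f) * (hB.cfc g)).trace =
      ((∑ i, ∑ j, f (hA.eigenvalues i) * g (hB.eigenvalues j) *
        Complex.normSq ((star (hA.eigenvectorUnitary : Mat d) * (hB.eigenvectorUnitary : Mat d)) i j) : ℝ) : ℂ) := by
  set U := (hA.eigenvectorUnitary : Mat d)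
  set V := (hB.eigenvectorUnitary : Mat d)
  set M := star U * V with hM
  set a : Mat d := diagonal (RCLike.ofReal ∘ f ∘ hA.eigenvalues) with ha
  set b : Mat d := diagonal (RCLike.ofReal ∘ g ∘ hB.eigenvalues) with hb
  have hU : U * star U = 1 := Unitary.coe_mul_star_self hA.eigenvectorUnitary
  have h1 : (U * a * star U) * (V * b * star V) = U * (a * M * b * star M) * star U := by
    simp only [hM, StarMul.star_mul, star_star, Matrix.mul_assoc]
    rw [hU, mul_one]
  rw [Matrix.IsHermitian.cfc, Matrix.IsHermitian.cfc, ← ha, ← hb, Unitary.conjStarAlgAut_apply,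
    Unitary.conjStarAlgAut_apply]
  change (U * a * star U * (V * b * star V)).trace = _
  rw [h1, trace_mul_cycle,
    Unitary.coe_star_mul_self, one_mul]
  simp only [Matrix.trace, Matrix.diag, Matrix.mul_apply, ha, hb, diagonal_apply,
    Function.comp_apply, ite_mul, zero_mul, mul_ite, mul_zero, Finset.sum_ite_eq,
    Finset.sum_ite_eq', Finset.mem_univ, if_true, Matrix.star_apply]
  have hcast : (RCLike.ofReal : ℝ → ℂ) = Complex.ofReal := rfl
  simp only [hcast]
  push_cast
  congr 1; ext i; congr 1; ext j
  trans ((f (hA.eigenvalues i) : ℂ) * (g (hB.eigenvalues j) : ℂ) * (M i j * star (M i j)))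
  · ring
  · rw [RCLike.star_def, Complex.mul_conj]

lemma unitary_row_sum {M : Mat d} (hM : M ∈ Matrix.unitaryGroup (Fin d) ℂ) (i : Fin d) :
    ∑ j, Complex.normSq (M i j) = 1 := by
  have h := Matrix.mem_unitaryGroup_iff.mp hM
  have h2 := congrArg (fun N => N i i) h
  simp only [Matrix.mul_apply, Matrix.star_apply, Matrix.one_apply_eq] at h2
  have : ((∑ j, Complex.normSq (M i j) : ℝ) : ℂ) = ((1:ℝ):ℂ) := by
    push_cast
    rw [← h2]
    congr 1; ext j
    rw [RCLike.star_def, Complex.mul_conj]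
  exact_mod_cast this

lemma unitary_col_sum {M : Mat d} (hM : M ∈ Matrix.unitaryGroup (Fin d) ℂ) (j : Fin d) :
    ∑ i, Complex.normSq (M i j) = 1 := by
  have h := Matrix.mem_unitaryGroup_iff'.mp hM
  have h2 := congrArg (fun N => N j j) h
  simp only [Matrix.mul_apply, Matrix.star_apply, Matrix.one_apply_eq] at h2
  have : ((∑ i, Complex.normSq (M i j) : ℝ) : ℂ) = ((1:ℝ):ℂ) := by
    push_cast
    rw [← h2]
    congr 1; ext i
    rw [RCLike.star_def, mul_comm, Complex.mul_conj]
  exact_mod_cast this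

lemma posDef_unitary_conj {D : Mat d} (hD : D.PosDef) (U : Matrix.unitaryGroup (Fin d) ℂ) :
    ((U : Mat d) * D * star (U : Mat d)).PosDef := by
  refine Matrix.PosDef.of_dotProduct_mulVec_pos ?_ ?_
  · rw [Matrix.star_eq_conjTranspose]
    exact Matrix.isHermitian_mul_mul_conjTranspose _ hD.1
  · intro x hx
    have hy : star (U : Mat d) *ᵥ x ≠ 0 := by
      intro h
      apply hx
      have := congrArg (fun v => (U : Mat d) *ᵥ v) h
      simpa [Matrix.mulVec_mulVec, Unitary.coe_mul_star_self, Matrix.one_mulVec,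
        Matrix.mulVec_zero] using this
    have key : star x ⬝ᵥ (((U : Mat d) * D * star (U : Mat d)) *ᵥ x)
        = star (star (U : Mat d) *ᵥ x) ⬝ᵥ (D *ᵥ (star (U : Mat d) *ᵥ x)) := by
      rw [← Matrix.mulVec_mulVec, ← Matrix.mulVec_mulVec]
      rw [Matrix.star_mulVec, Matrix.dotProduct_mulVec (star x)]
      congr 1
      conv_rhs => rw [← Matrix.star_eq_conjTranspose, star_star]
    rw [key]
    exact hD.dotProduct_mulVec_pos hy

lemma posDef_real_smul {M : Mat d} (hM : M.PosDef) {r : ℝ} (hr : 0 < r) :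
    (((r:ℝ) : ℂ) • M).PosDef := by
  refine Matrix.PosDef.of_dotProduct_mulVec_pos ?_ ?_
  · have : star (((r:ℝ):ℂ) • M) = ((r:ℝ):ℂ) • M := by
      rw [star_smul, Matrix.star_eq_conjTranspose, hM.1, Complex.star_def,
        Complex.conj_ofReal]
    exact this
  · intro x hx
    rw [Matrix.smul_mulVec, dotProduct_smul]
    have := hM.dotProduct_mulVec_pos hx
    rw [smul_eq_mul]
    exact mul_pos (by exact_mod_cast hr) this

lemma mexp_eq {A : Mat d} (hA : A.IsHermitian) : mexp A = hA.cfc Real.exp := hA.cfc_eq Real.exp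

lemma mlog_eq {A : Mat d} (hA : A.IsHermitian) : mlog A = hA.cfc Real.log := hA.cfc_eq Real.log

lemma self_eq_hcfc {A : Mat d} (hA : A.IsHermitian) : A = hA.cfc id := by
  calc A = cfc (id : ℝ → ℝ) A := (cfc_id ℝ A hA).symm
  _ = hA.cfc id := hA.cfc_eq id

lemma self_mul_mlog {A : Mat d} (hA : A.IsHermitian) :
    A * mlog A = cfc (fun x : ℝ => x * Real.log x) A := by
  have h := cfc_mul (fun x : ℝ => x) Real.log A (contOn _ _) (contOn _ _)
  have hid : cfc (fun x:ℝ => x) A = A := cfc_id' ℝ A hA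
  rw [hid] at h
  rw [mlog, ← h]

lemma mlog_real_smul_mexp (H : Mat d) (hH : H.IsHermitian) (r : ℝ) (hr : 0 < r) :
    mlog (((r:ℝ) : ℂ) • mexp H) = H + (Real.log r) • (1 : Mat d) := by
  have hsa : IsSelfAdjoint H := hH
  have h1 : (((r:ℝ):ℂ) • mexp H) = cfc (fun x => r * Real.exp x) H := by
    rw [cfc_const_mul r Real.exp H (contOn _ _), mexp]
    ext i j
    simp [Matrix.smul_apply, Complex.real_smul]
  rw [mlog, h1,
    ← cfc_comp Real.log (fun x => r * Real.exp x) H hsa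
      (contOn_fin ((Matrix.finite_real_spectrum (A := H)).image _) _) (contOn _ _)]
  have h2 : (spectrum ℝ H).EqOn (Real.log ∘ fun x => r * Real.exp x)
      (fun x => id x + Real.log r) := fun x _ => by
    simp [Function.comp, Real.log_mul (ne_of_gt hr) (Real.exp_ne_zero x), Real.log_exp, add_comm]
  have hid : cfc (id : ℝ → ℝ) H = H := cfc_id ℝ H hsa
  have hconst : cfc (fun _ : ℝ => Real.log r) H = algebraMap ℝ (Mat d) (Real.log r) :=
    cfc_const (Real.log r) H hsa
  rw [cfc_congr h2, cfc_add (a := H) id (fun _ => Real.log r) (contOn _ _) (contOn _ _),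
    hid, hconst, Algebra.algebraMap_eq_smul_one]

lemma mexp_posDef {H : Mat d} (hH : H.IsHermitian) : (mexp H).PosDef := by
  rw [mexp_eq hH, Matrix.IsHermitian.cfc]
  exact posDef_unitary_conj
    (Matrix.PosDef.diagonal fun i => by
      simpa using Complex.zero_lt_real.mpr (Real.exp_pos (hH.eigenvalues i)))
    hH.eigenvectorUnitary

lemma sum_eigenvalues_eq_one {A : Mat d} (hA : A.IsHermitian) (h1 : A.trace = 1) :
    ∑ i, hA.eigenvalues i = 1 := by
  have h2 : A.trace = ((∑ i, hA.eigenvalues i : ℝ) : ℂ) := by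
    conv_lhs => rw [self_eq_hcfc hA]
    simpa using trace_hcfc hA id
  rw [h1] at h2
  exact_mod_cast h2.symm

lemma klein {ρ σ : Mat d} (hρ : ρ.PosDef) (hσ : σ.PosDef)
    (hρ1 : ρ.trace = 1) (hσ1 : σ.trace = 1) :
    (Matrix.trace (ρ * mlog σ)).re ≤ (Matrix.trace (ρ * mlog ρ)).re := by
  have hρh := hρ.1
  have hσh := hσ.1
  set p := hρh.eigenvalues with hp
  set q := hσh.eigenvalues with hq
  have hppos : ∀ i, 0 < p i := hρ.eigenvalues_pos
  have hqpos : ∀ j, 0 < q j := hσ.eigenvalues_pos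
  have hsump : ∑ i, p i = 1 := sum_eigenvalues_eq_one hρh hρ1
  have hsumq : ∑ j, q j = 1 := sum_eigenvalues_eq_one hσh hσ1
  set M : Mat d := star (hρh.eigenvectorUnitary : Mat d) * (hσh.eigenvectorUnitary : Mat d)
    with hMdef
  have hM : M ∈ Matrix.unitaryGroup (Fin d) ℂ :=
    mul_mem (Unitary.star_mem (SetLike.coe_mem _)) (SetLike.coe_mem _)
  set w : Fin d → Fin d → ℝ := fun i j => Complex.normSq (M i j) with hwdef
  have hw : ∀ i j, 0 ≤ w i j := fun i j => Complex.normSq_nonneg _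
  have hrow : ∀ i, ∑ j, w i j = 1 := unitary_row_sum hM
  have hcol : ∀ j, ∑ i, w i j = 1 := unitary_col_sum hM
  have hRHS : (Matrix.trace (ρ * mlog ρ)).re = ∑ i, p i * Real.log (p i) := by
    rw [self_mul_mlog hρh, hρh.cfc_eq, trace_hcfc hρh, Complex.ofReal_re]
  have hLHS : (Matrix.trace (ρ * mlog σ)).re = ∑ i, ∑ j, p i * Real.log (q j) * w i j := by
    conv_lhs => rw [self_eq_hcfc hρh, mlog_eq hσh]
    rw [trace_hcfc_mul_hcfc hρh hσh id Real.log, Complex.ofReal_re]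
    rfl
  rw [hLHS, hRHS]
  calc ∑ i, ∑ j, p i * Real.log (q j) * w i j
      ≤ ∑ i, ∑ j, (p i * Real.log (p i) * w i j + q j * w i j - p i * w i j) := by
        refine Finset.sum_le_sum fun i _ => Finset.sum_le_sum fun j _ => ?_
        have hs : p i * Real.log (q j) ≤ p i * Real.log (p i) + q j - p i := by
          have h0 := Real.log_le_sub_one_of_pos (div_pos (hqpos j) (hppos i))
          rw [Real.log_div (hqpos j).ne' (hppos i).ne'] at h0
          have h2 : p i * (Real.log (q j) - Real.log (p i)) ≤ p i * (q j / p i - 1) :=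
            mul_le_mul_of_nonneg_left h0 (hppos i).le
          have h3 : p i * (q j / p i - 1) = q j - p i := by
            rw [mul_sub, mul_one, mul_div_cancel₀ _ (hppos i).ne']
          nlinarith
        calc p i * Real.log (q j) * w i j
            ≤ (p i * Real.log (p i) + q j - p i) * w i j :=
              mul_le_mul_of_nonneg_right hs (hw i j)
          _ = p i * Real.log (p i) * w i j + q j * w i j - p i * w i j := by ring
    _ = ∑ i, p i * Real.log (p i) := by
        simp_rw [Finset.sum_sub_distrib, Finset.sum_add_distrib, ← Finset.mul_sum, hrow, mul_one]
        rw [Finset.sum_comm (f := fun i j => q j * w i j)]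
        simp_rw [← Finset.mul_sum, hcol, mul_one, hsump, hsumq]
        ring

end QHelpers

open QHelpers Matrix in
/-- `Re⟨G, ρ_G(α) - ρ⟩ ≤ - D(ρ_G(α), ρ) / α`. -/
theorem stmt_1 {d : ℕ} (hd : 0 < d) (ρ G : Mat d) (hρ : ρ.PosDef) (hρ1 : ρ.trace = 1)
    (hG : G.IsHermitian) (α : ℝ) (hα : 0 < α) :
    hsInner G (egStep ρ G α - ρ) ≤ -qRelEnt (egStep ρ G α) ρ / α := by
  have hL : IsSelfAdjoint (mlog ρ) := cfc_predicate Real.log ρ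
  have hGsa : IsSelfAdjoint G := hG
  set L := mlog ρ with hLdef
  set H := L - α • G with hHdef
  have hHsa : IsSelfAdjoint H := hL.sub (IsSelfAdjoint.smul (star_trivial α) hGsa)
  have hHh : H.IsHermitian := hHsa
  have hexpPD : (mexp H).PosDef := mexp_posDef hHh
  set creal := ∑ i, Real.exp (hHh.eigenvalues i) with hcreal
  have hcpos : 0 < creal :=
    Finset.sum_pos (fun i _ => Real.exp_pos _) ⟨⟨0, hd⟩, Finset.mem_univ _⟩
  have htr : (mexp H).trace = ((creal : ℝ) : ℂ) := by
    rw [mexp_eq hHh, trace_hcfc hHh]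
  have hσdef : egStep ρ G α = (((creal⁻¹ : ℝ)) : ℂ) • mexp H := by
    rw [egStep, ← hLdef, ← hHdef, htr, ← Complex.ofReal_inv]
  set σ := egStep ρ G α with hσ
  have hσPD : σ.PosDef := by
    rw [hσdef]
    exact posDef_real_smul hexpPD (inv_pos.2 hcpos)
  have hσh : σ.IsHermitian := hσPD.1
  have hσtr : σ.trace = 1 := by
    rw [hσdef, Matrix.trace_smul, htr, smul_eq_mul, ← Complex.ofReal_mul,
      inv_mul_cancel₀ hcpos.ne', Complex.ofReal_one]
  set lc := Real.log creal⁻¹ with hlc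
  have hmlogσ : mlog σ = H + lc • (1 : Mat d) := by
    rw [hσdef]
    exact mlog_real_smul_mexp H hHh _ (inv_pos.2 hcpos)
  have hαG : α • G = L - mlog σ + lc • (1 : Mat d) := by
    rw [hmlogσ, hHdef]
    module
  -- basic trace re computation
  have keyX : ∀ X : Mat d, Matrix.trace X = 1 →
      α * (Matrix.trace (G * X)).re =
        (Matrix.trace (X * L)).re - (Matrix.trace (X * mlog σ)).re + lc := by
    intro X hX
    have h1 : α * (Matrix.trace (G * X)).re = (Matrix.trace ((α • G) * X)).re := by
      rw [Matrix.smul_mul, Matrix.trace_smul]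
      rw [show (α • Matrix.trace (G * X)) = ((α:ℂ) * Matrix.trace (G * X)) from
        Complex.real_smul]
      rw [Complex.re_ofReal_mul]
    rw [h1, hαG, Matrix.add_mul, Matrix.sub_mul, Matrix.smul_mul, Matrix.one_mul,
      Matrix.trace_add, Matrix.trace_sub, Matrix.trace_smul]
    rw [Complex.add_re, Complex.sub_re]
    rw [show (lc • Matrix.trace X) = ((lc:ℂ) * Matrix.trace X) from Complex.real_smul, hX,
      mul_one, Complex.ofReal_re]
    rw [trace_mul_comm X L, trace_mul_comm X (mlog σ)]
  have hkσ := keyX σ hσtr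
  have hkρ := keyX ρ hρ1
  -- hsInner expansion
  have hhs : hsInner G (σ - ρ) = (Matrix.trace (G * σ)).re - (Matrix.trace (G * ρ)).re := by
    rw [hsInner, hG.eq, Matrix.mul_sub, Matrix.trace_sub, Complex.sub_re]
  -- trEnt σ = re tr (σ * mlog σ)
  have hent : trEnt σ = (Matrix.trace (σ * mlog σ)).re := by
    rw [trEnt, ← self_mul_mlog hσh]
  have hqre : qRelEnt σ ρ = (Matrix.trace (σ * mlog σ)).re - (Matrix.trace (σ * L)).re := by
    rw [qRelEnt, hent, hLdef]
  have hklein : (Matrix.trace (ρ * mlog σ)).re ≤ (Matrix.trace (ρ * L)).re := by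
    rw [hLdef]
    exact klein hρ hσPD hρ1 hσtr
  rw [le_div_iff₀ hα] at *
  · nlinarith [hkσ, hkρ, hhs, hqre, hklein]

end
end

section
/- Let S be a convex set of d×d complex matrices contained in an open set U, let f : U → ℝ be convex and differentiable with Hermitian gradient f', and suppose f' is L-Lipschitz on S with respect to the Frobenius norm for some L > 0. Then for every nonsingular density matrix ρ ∈ S and every density matrix σ ∈ S, one has 0 ≤ f(σ) − f(ρ) − Re⟨f'(ρ), σ − ρ⟩ ≤ L · D(σ, ρ). -/
open scoped Matrix ComplexOrder

noncomputable section

attribute [local instance] Matrix.frobeniusNormedAddCommGroup Matrix.frobeniusNormedSpace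

/-- `f` is (Fréchet) differentiable at `x` with gradient `g`, with respect to the real
inner product `Re tr (Xᴴ Y)`: the derivative is `V ↦ Re tr (gᴴ V)`. -/
def HasMatGradientAt {d : ℕ} (f : Mat d → ℝ) (g : Mat d) (x : Mat d) : Prop :=
  ∃ L : Mat d →L[ℝ] ℝ, HasFDerivAt f L x ∧ ∀ V : Mat d, L V = (Matrix.trace (gᴴ * V)).re

private lemma Gderiv {x : ℝ} (hx : 0 < x) :
    HasDerivAt (fun x : ℝ => x * Real.log x - x ^ 2 / 2) (Real.log x + 1 - x) x := by
  have h1 := Real.hasDerivAt_mul_log hx.ne'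
  have h2 : HasDerivAt (fun x : ℝ => x ^ 2 / 2) x x := by
    simpa using (hasDerivAt_pow 2 x).div_const 2
  exact h1.sub h2

private lemma Gmono {x y : ℝ} (hx : 0 < x) (hxy : x ≤ y) (hy1 : y ≤ 1) :
    Real.log x + 1 - x ≤ Real.log y + 1 - y := by
  have hy : 0 < y := lt_of_lt_of_le hx hxy
  have h1 : Real.log (x / y) ≤ x / y - 1 := Real.log_le_sub_one_of_pos (div_pos hx hy)
  rw [Real.log_div hx.ne' hy.ne'] at h1
  have hlog : Real.log x ≤ Real.log y := Real.log_le_log hx hxy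
  have h1' : (Real.log x - Real.log y) * y ≤ x - y := by
    have := mul_le_mul_of_nonneg_right h1 hy.le
    calc (Real.log x - Real.log y) * y ≤ (x / y - 1) * y := this
      _ = x - y := by field_simp
  nlinarith

private lemma key_scalar {a b : ℝ} (ha0 : 0 ≤ a) (ha1 : a ≤ 1) (hb0 : 0 < b) (hb1 : b ≤ 1) :
    (a - b) ^ 2 / 2 ≤ a * Real.log a - a * Real.log b - a + b := by
  set G : ℝ → ℝ := fun x => x * Real.log x - x ^ 2 / 2 with hG
  have hGcont : Continuous G := Real.continuous_mul_log.sub (by continuity)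
  rcases lt_trichotomy a b with hab | hab | hab
  · obtain ⟨c, hc, hceq⟩ := exists_hasDerivAt_eq_slope G (fun x => Real.log x + 1 - x) hab
      hGcont.continuousOn (fun x hx => Gderiv (lt_of_le_of_lt ha0 hx.1))
    have hc0 : 0 < c := lt_of_le_of_lt ha0 hc.1
    have hmono := Gmono hc0 hc.2.le hb1
    rw [eq_div_iff (sub_ne_zero.mpr hab.ne')] at hceq
    have hGa : G a = a * Real.log a - a ^ 2 / 2 := rfl
    have hGb : G b = b * Real.log b - b ^ 2 / 2 := rfl
    rw [hGa, hGb] at hceq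
    have key0 := mul_nonneg (sub_nonneg.2 hmono) (sub_nonneg.2 hab.le)
    have key : 0 ≤ ((Real.log c + 1 - c) - (Real.log b + 1 - b)) * (a - b) := by
      nlinarith [key0]
    have expand : a * Real.log a - a * Real.log b - a + b - (a - b) ^ 2 / 2
        = ((Real.log c + 1 - c) - (Real.log b + 1 - b)) * (a - b) := by
      linear_combination hceq
    linarith
  · subst hab; simp
  · obtain ⟨c, hc, hceq⟩ := exists_hasDerivAt_eq_slope G (fun x => Real.log x + 1 - x) hab
      hGcont.continuousOn (fun x hx => Gderiv (lt_trans hb0 hx.1))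
    have hc0 : 0 < c := lt_trans hb0 hc.1
    have hmono := Gmono hb0 hc.1.le (le_trans hc.2.le ha1)
    rw [eq_div_iff (sub_ne_zero.mpr hab.ne')] at hceq
    have hGa : G a = a * Real.log a - a ^ 2 / 2 := rfl
    have hGb : G b = b * Real.log b - b ^ 2 / 2 := rfl
    rw [hGa, hGb] at hceq
    have key : 0 ≤ ((Real.log c + 1 - c) - (Real.log b + 1 - b)) * (a - b) :=
      mul_nonneg (by linarith) (by linarith)
    have expand : a * Real.log a - a * Real.log b - a + b - (a - b) ^ 2 / 2
        = ((Real.log c + 1 - c) - (Real.log b + 1 - b)) * (a - b) := by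
      linear_combination -hceq
    linarith

private lemma trace_UDU_VDV {d : ℕ} (U V : Mat d) (a b : Fin d → ℝ) :
    (Matrix.trace ((U * Matrix.diagonal (Complex.ofReal ∘ a) * Uᴴ) *
      (V * Matrix.diagonal (Complex.ofReal ∘ b) * Vᴴ))).re
    = ∑ i, ∑ j, ‖(Uᴴ * V) i j‖ ^ 2 * (a i * b j) := by
  set M := Uᴴ * V with hM
  set Da := Matrix.diagonal (Complex.ofReal ∘ a) with hDa
  set Db := Matrix.diagonal (Complex.ofReal ∘ b) with hDb
  have hassoc : U * Da * Uᴴ * (V * Db * Vᴴ) = U * (Da * (Uᴴ * (V * (Db * Vᴴ)))) := by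
    simp only [Matrix.mul_assoc]
  rw [hassoc, Matrix.trace_mul_comm]
  have hre : Da * (Uᴴ * (V * (Db * Vᴴ))) * U = Da * (M * Db * Mᴴ) := by
    simp only [hM, Matrix.conjTranspose_mul, Matrix.conjTranspose_conjTranspose,
      Matrix.mul_assoc]
  rw [hre, Matrix.trace]
  rw [Complex.re_sum]
  refine Finset.sum_congr rfl fun i _ => ?_
  rw [Matrix.diag_apply, Matrix.diagonal_mul, Matrix.mul_apply]
  simp only [Matrix.mul_diagonal, Matrix.conjTranspose_apply]
  rw [Finset.mul_sum, Complex.re_sum]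
  refine Finset.sum_congr rfl fun j _ => ?_
  have h1 : (M * Db) i j * star (M i j) = M i j * Complex.ofReal (b j) * star (M i j) := by
    rw [hDb, Matrix.mul_diagonal]; rfl
  rw [h1]
  have h2 : M i j * Complex.ofReal (b j) * star (M i j)
      = Complex.ofReal (b j) * (M i j * star (M i j)) := by ring
  rw [h2]
  have h3 : M i j * star (M i j) = Complex.ofReal (‖M i j‖ ^ 2) := by
    rw [Complex.star_def, Complex.mul_conj, Complex.normSq_eq_norm_sq]
  rw [h3]
  try simp only [Function.comp_apply, ← Complex.ofReal_mul, Complex.ofReal_re]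
  try ring

private lemma mul_star_self_eq (z : ℂ) : z * star z = Complex.ofReal (‖z‖ ^ 2) := by
  rw [Complex.star_def, Complex.mul_conj, Complex.normSq_eq_norm_sq]

private lemma rowsum {d : ℕ} (M : Mat d) (hM : M * Mᴴ = 1) (i : Fin d) :
    ∑ j, ‖M i j‖ ^ 2 = 1 := by
  have h : (M * Mᴴ) i i = 1 := by rw [hM, Matrix.one_apply_eq]
  rw [Matrix.mul_apply] at h
  simp only [Matrix.conjTranspose_apply, mul_star_self_eq, ← Complex.ofReal_sum] at h
  exact_mod_cast h

private lemma colsum {d : ℕ} (M : Mat d) (hM : Mᴴ * M = 1) (j : Fin d) :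
    ∑ i, ‖M i j‖ ^ 2 = 1 := by
  have h : (Mᴴ * M) j j = 1 := by rw [hM, Matrix.one_apply_eq]
  rw [Matrix.mul_apply] at h
  have : ∀ i, Mᴴ j i * M i j = Complex.ofReal (‖M i j‖ ^ 2) := fun i => by
    rw [Matrix.conjTranspose_apply, mul_comm, mul_star_self_eq]
  simp only [this, ← Complex.ofReal_sum] at h
  exact_mod_cast h

private lemma trace_UDU {d : ℕ} (U : Mat d) (hU : Uᴴ * U = 1) (a : Fin d → ℝ) :
    Matrix.trace (U * Matrix.diagonal (Complex.ofReal ∘ a) * Uᴴ) = Complex.ofReal (∑ i, a i) := by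
  rw [Matrix.trace_mul_cycle, hU, Matrix.one_mul, Matrix.trace_diagonal]
  simp [Complex.ofReal_sum]

private lemma sum_one_diag {d : ℕ} (g : Fin d → Fin d → ℝ) :
    (∑ i, ∑ j, ‖(1 : Mat d) i j‖ ^ 2 * g i j) = ∑ i, g i i := by
  refine Finset.sum_congr rfl fun i _ => ?_
  rw [Finset.sum_eq_single i]
  · simp [Matrix.one_apply_eq]
  · intro j _ hj
    simp [Matrix.one_apply_ne (Ne.symm hj)]
  · simp

private lemma norm_sq_trace {d : ℕ} (X : Mat d) :
    ‖X‖ ^ 2 = (Matrix.trace (Xᴴ * X)).re := by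
  have h2 : ((2 : ℕ) : ℝ) = (2 : ℝ) := by norm_num
  have hnn : 0 ≤ ∑ i, ∑ j, ‖X i j‖ ^ (2 : ℝ) := by
    refine Finset.sum_nonneg fun i _ => Finset.sum_nonneg fun j _ => ?_
    positivity
  have hnorm : ‖X‖ ^ 2 = ∑ i, ∑ j, ‖X i j‖ ^ 2 := by
    rw [Matrix.frobenius_norm_def, ← Real.rpow_natCast _ 2, ← Real.rpow_mul hnn]
    norm_num
  rw [hnorm, Matrix.trace, Complex.re_sum, Finset.sum_comm]
  refine Finset.sum_congr rfl fun j _ => ?_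
  rw [Matrix.diag_apply, Matrix.mul_apply]
  have : ∀ i, Xᴴ j i * X i j = Complex.ofReal (‖X i j‖ ^ 2) := fun i => by
    rw [Matrix.conjTranspose_apply, mul_comm, mul_star_self_eq]
  simp only [this, ← Complex.ofReal_sum, Complex.ofReal_re]

private lemma frob_sq {d : ℕ} (X : Mat d) : ‖X‖ ^ 2 = ∑ i, ∑ j, ‖X i j‖ ^ 2 := by
  have hnn : 0 ≤ ∑ i, ∑ j, ‖X i j‖ ^ (2 : ℝ) := by
    refine Finset.sum_nonneg fun i _ => Finset.sum_nonneg fun j _ => ?_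
    positivity
  rw [Matrix.frobenius_norm_def, ← Real.rpow_natCast _ 2, ← Real.rpow_mul hnn]
  norm_num

private lemma hs_sub_left {d : ℕ} (X X' Y : Mat d) :
    hsInner (X - X') Y = hsInner X Y - hsInner X' Y := by
  simp [hsInner, Matrix.conjTranspose_sub, Matrix.sub_mul, Matrix.trace_sub, Complex.sub_re]

private lemma hs_cs {d : ℕ} (X Y : Mat d) : hsInner X Y ≤ ‖X‖ * ‖Y‖ := by
  have h1 : hsInner X Y ≤ ∑ j : Fin d, ∑ i : Fin d, ‖X i j‖ * ‖Y i j‖ := by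
    rw [hsInner, Matrix.trace, Complex.re_sum]
    refine Finset.sum_le_sum fun j _ => ?_
    rw [Matrix.diag_apply, Matrix.mul_apply, Complex.re_sum]
    refine Finset.sum_le_sum fun i _ => ?_
    calc (Xᴴ j i * Y i j).re ≤ ‖Xᴴ j i * Y i j‖ := Complex.re_le_norm _
      _ = ‖X i j‖ * ‖Y i j‖ := by
          rw [norm_mul, Matrix.conjTranspose_apply, norm_star]
  refine h1.trans ?_
  have h2 : ∑ j : Fin d, ∑ i : Fin d, ‖X i j‖ * ‖Y i j‖
      = ∑ q : Fin d × Fin d, ‖X q.2 q.1‖ * ‖Y q.2 q.1‖ := by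
    rw [Fintype.sum_prod_type]
  rw [h2]
  have h3 := Real.sum_mul_le_sqrt_mul_sqrt Finset.univ
    (fun q : Fin d × Fin d => ‖X q.2 q.1‖) (fun q : Fin d × Fin d => ‖Y q.2 q.1‖)
  refine h3.trans ?_
  have hX : Real.sqrt (∑ q : Fin d × Fin d, ‖X q.2 q.1‖ ^ 2) = ‖X‖ := by
    rw [show (∑ q : Fin d × Fin d, ‖X q.2 q.1‖ ^ 2) = ‖X‖ ^ 2 by
      rw [frob_sq, Fintype.sum_prod_type, Finset.sum_comm]]
    exact Real.sqrt_sq (norm_nonneg X)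
  have hY : Real.sqrt (∑ q : Fin d × Fin d, ‖Y q.2 q.1‖ ^ 2) = ‖Y‖ := by
    rw [show (∑ q : Fin d × Fin d, ‖Y q.2 q.1‖ ^ 2) = ‖Y‖ ^ 2 by
      rw [frob_sq, Fintype.sum_prod_type, Finset.sum_comm]]
    exact Real.sqrt_sq (norm_nonneg Y)
  rw [hX, hY]

private lemma hs_abs_cs {d : ℕ} (X Y : Mat d) : |hsInner X Y| ≤ ‖X‖ * ‖Y‖ := by
  rw [abs_le]
  constructor
  · have := hs_cs (-X) Y
    have hneg : hsInner (-X) Y = -hsInner X Y := by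
      have := hs_sub_left 0 X Y
      simpa [hsInner] using this
    rw [hneg, norm_neg] at this
    linarith
  · exact hs_cs X Y

private lemma pinsker {d : ℕ} (σ ρ : Mat d) (hσ : IsDensity σ) (hρ : ρ.PosDef)
    (hρ1 : ρ.trace = 1) : ‖σ - ρ‖ ^ 2 / 2 ≤ qRelEnt σ ρ := by
  obtain ⟨hσpsd, hσ1⟩ := hσ
  have hσh : σ.IsHermitian := hσpsd.1
  have hρh : ρ.IsHermitian := hρ.1
  have hofReal : (RCLike.ofReal : ℝ → ℂ) = Complex.ofReal := rfl
  set U : Mat d := (Matrix.IsHermitian.eigenvectorUnitary hσh : Mat d) with hUdef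
  set V : Mat d := (Matrix.IsHermitian.eigenvectorUnitary hρh : Mat d) with hVdef
  set lam := hσh.eigenvalues with hlam
  set mu := hρh.eigenvalues with hmu
  have hU2 : Uᴴ * U = 1 := by
    rw [← Matrix.star_eq_conjTranspose]
    exact Unitary.coe_star_mul_self _
  have hU1 : U * Uᴴ = 1 := by
    rw [← Matrix.star_eq_conjTranspose]
    exact Unitary.coe_mul_star_self _
  have hV2 : Vᴴ * V = 1 := by
    rw [← Matrix.star_eq_conjTranspose]
    exact Unitary.coe_star_mul_self _
  have hV1 : V * Vᴴ = 1 := by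
    rw [← Matrix.star_eq_conjTranspose]
    exact Unitary.coe_mul_star_self _
  have hσspec : σ = U * Matrix.diagonal (Complex.ofReal ∘ lam) * Uᴴ := by
    rw [← hofReal, ← Matrix.star_eq_conjTranspose]
    exact hσh.spectral_theorem
  have hρspec : ρ = V * Matrix.diagonal (Complex.ofReal ∘ mu) * Vᴴ := by
    rw [← hofReal, ← Matrix.star_eq_conjTranspose]
    exact hρh.spectral_theorem
  have hcfcσ : ∀ g : ℝ → ℝ, cfc g σ = U * Matrix.diagonal (Complex.ofReal ∘ (g ∘ lam)) * Uᴴ := by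
    intro g
    rw [hσh.cfc_eq, Matrix.IsHermitian.cfc, ← Matrix.star_eq_conjTranspose, hofReal, Unitary.conjStarAlgAut_apply]
  have hcfcρ : ∀ g : ℝ → ℝ, cfc g ρ = V * Matrix.diagonal (Complex.ofReal ∘ (g ∘ mu)) * Vᴴ := by
    intro g
    rw [hρh.cfc_eq, Matrix.IsHermitian.cfc, ← Matrix.star_eq_conjTranspose, hofReal, Unitary.conjStarAlgAut_apply]
  set M := Uᴴ * V with hMdef
  set p : Fin d → Fin d → ℝ := fun i j => ‖M i j‖ ^ 2 with hpdef
  have hM1 : M * Mᴴ = 1 := by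
    rw [hMdef, Matrix.conjTranspose_mul, Matrix.conjTranspose_conjTranspose]
    calc Uᴴ * V * (Vᴴ * U) = Uᴴ * (V * Vᴴ) * U := by simp only [Matrix.mul_assoc]
      _ = 1 := by rw [hV1, Matrix.mul_one, hU2]
  have hM2 : Mᴴ * M = 1 := by
    rw [hMdef, Matrix.conjTranspose_mul, Matrix.conjTranspose_conjTranspose]
    calc Vᴴ * U * (Uᴴ * V) = Vᴴ * (U * Uᴴ) * V := by simp only [Matrix.mul_assoc]
      _ = 1 := by rw [hU1, Matrix.mul_one, hV2]
  have hrow : ∀ i, ∑ j, p i j = 1 := rowsum M hM1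
  have hcol : ∀ j, ∑ i, p i j = 1 := colsum M hM2
  have hp0 : ∀ i j, 0 ≤ p i j := fun i j => by positivity
  have hlam0 : ∀ i, 0 ≤ lam i := hσpsd.eigenvalues_nonneg
  have hmu0 : ∀ j, 0 < mu j := hρ.eigenvalues_pos
  have hlamsum : ∑ i, lam i = 1 := by
    have h := trace_UDU U hU2 lam
    rw [← hσspec, hσ1] at h
    exact_mod_cast h.symm
  have hmusum : ∑ j, mu j = 1 := by
    have h := trace_UDU V hV2 mu
    rw [← hρspec, hρ1] at h
    exact_mod_cast h.symm
  have hlam1 : ∀ i, lam i ≤ 1 := fun i => by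
    rw [← hlamsum]
    exact Finset.single_le_sum (fun j _ => hlam0 j) (Finset.mem_univ i)
  have hmu1 : ∀ j, mu j ≤ 1 := fun j => by
    rw [← hmusum]
    exact Finset.single_le_sum (fun i _ => (hmu0 i).le) (Finset.mem_univ j)
  have tσσ : (Matrix.trace (σ * σ)).re = ∑ i, lam i * lam i := by
    conv_lhs => rw [hσspec]
    rw [trace_UDU_VDV, hU2, sum_one_diag]
  have tρρ : (Matrix.trace (ρ * ρ)).re = ∑ j, mu j * mu j := by
    conv_lhs => rw [hρspec]
    rw [trace_UDU_VDV, hV2, sum_one_diag]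
  have tσρ : (Matrix.trace (σ * ρ)).re = ∑ i, ∑ j, p i j * (lam i * mu j) := by
    conv_lhs => rw [hσspec, hρspec]
    rw [trace_UDU_VDV]
  have tEnt : trEnt σ = ∑ i, lam i * Real.log (lam i) := by
    rw [trEnt, hcfcσ, trace_UDU _ hU2, Complex.ofReal_re]
    rfl
  have tlog : (Matrix.trace (σ * mlog ρ)).re = ∑ i, ∑ j, p i j * (lam i * Real.log (mu j)) := by
    rw [mlog, hcfcρ]
    conv_lhs => rw [hσspec]
    rw [trace_UDU_VDV]
    rfl
  have hnormsq : ‖σ - ρ‖ ^ 2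
      = (∑ i, lam i * lam i) - 2 * (∑ i, ∑ j, p i j * (lam i * mu j)) + ∑ j, mu j * mu j := by
    rw [norm_sq_trace]
    have hsub : (σ - ρ)ᴴ = σ - ρ := by rw [Matrix.conjTranspose_sub, hσh.eq, hρh.eq]
    rw [hsub]
    have hexp : Matrix.trace ((σ - ρ) * (σ - ρ))
        = Matrix.trace (σ * σ) - Matrix.trace (σ * ρ) - Matrix.trace (σ * ρ) + Matrix.trace (ρ * ρ) := by
      rw [sub_mul, mul_sub, mul_sub, Matrix.trace_sub, Matrix.trace_sub, Matrix.trace_sub,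
        Matrix.trace_mul_comm ρ σ]
      ring
    rw [hexp, Complex.add_re, Complex.sub_re, Complex.sub_re, tσσ, tσρ, tρρ]
    ring
  -- termwise inequality
  have keysum : ∑ i, ∑ j, p i j * ((lam i - mu j) ^ 2 / 2)
      ≤ ∑ i, ∑ j, p i j * (lam i * Real.log (lam i) - lam i * Real.log (mu j) - lam i + mu j) := by
    refine Finset.sum_le_sum fun i _ => Finset.sum_le_sum fun j _ => ?_
    exact mul_le_mul_of_nonneg_left (key_scalar (hlam0 i) (hlam1 i) (hmu0 j) (hmu1 j)) (hp0 i j)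
  -- split sums
  have hArow : ∑ i, ∑ j, p i j * (lam i * lam i) = ∑ i, lam i * lam i := by
    refine Finset.sum_congr rfl fun i _ => ?_
    rw [← Finset.sum_mul, hrow, one_mul]
  have hCcol : ∑ i, ∑ j, p i j * (mu j * mu j) = ∑ j, mu j * mu j := by
    rw [Finset.sum_comm]
    refine Finset.sum_congr rfl fun j _ => ?_
    rw [← Finset.sum_mul, hcol, one_mul]
  have hS1 : ∑ i, ∑ j, p i j * lam i = 1 := by
    rw [← hlamsum]
    refine Finset.sum_congr rfl fun i _ => ?_
    rw [← Finset.sum_mul, hrow, one_mul]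
  have hS2 : ∑ i, ∑ j, p i j * mu j = 1 := by
    rw [Finset.sum_comm, ← hmusum]
    refine Finset.sum_congr rfl fun j _ => ?_
    rw [← Finset.sum_mul, hcol, one_mul]
  have hD1 : ∑ i, ∑ j, p i j * (lam i * Real.log (lam i)) = ∑ i, lam i * Real.log (lam i) := by
    refine Finset.sum_congr rfl fun i _ => ?_
    rw [← Finset.sum_mul, hrow, one_mul]
  have split1 : ∑ i, ∑ j, p i j * ((lam i - mu j) ^ 2 / 2)
      = ((∑ i, ∑ j, p i j * (lam i * lam i)) - 2 * (∑ i, ∑ j, p i j * (lam i * mu j))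
        + ∑ i, ∑ j, p i j * (mu j * mu j)) / 2 := by
    have h : ∀ i j, p i j * ((lam i - mu j) ^ 2 / 2)
        = p i j * (lam i * lam i) / 2 - p i j * (lam i * mu j) + p i j * (mu j * mu j) / 2 :=
      fun i j => by ring
    simp only [h, Finset.sum_add_distrib, Finset.sum_sub_distrib, ← Finset.sum_div]
    ring
  have split2 : ∑ i, ∑ j, p i j * (lam i * Real.log (lam i) - lam i * Real.log (mu j) - lam i + mu j)
      = (∑ i, ∑ j, p i j * (lam i * Real.log (lam i)))
        - (∑ i, ∑ j, p i j * (lam i * Real.log (mu j)))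
        - (∑ i, ∑ j, p i j * lam i) + ∑ i, ∑ j, p i j * mu j := by
    have h : ∀ i j, p i j * (lam i * Real.log (lam i) - lam i * Real.log (mu j) - lam i + mu j)
        = p i j * (lam i * Real.log (lam i)) - p i j * (lam i * Real.log (mu j))
          - p i j * lam i + p i j * mu j := fun i j => by ring
    simp only [h, Finset.sum_add_distrib, Finset.sum_sub_distrib]
  rw [qRelEnt, tEnt, tlog, hnormsq, ← hD1]
  linarith [keysum, split1, split2, hArow, hCcol, hS1, hS2]

/-- local bound on the first-order approximation error via the relative
entropy, for `f'` `L`-Lipschitz (w.r.t. the Frobenius norm) on a convex set `S`. -/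
theorem stmt_3 {d : ℕ} (hd : 0 < d) (U S : Set (Mat d)) (hUopen : IsOpen U)
    (hSU : S ⊆ U) (hSconv : Convex ℝ S)
    (f : Mat d → ℝ) (f' : Mat d → Mat d)
    (hconv : ConvexOn ℝ S f)
    (hgrad : ∀ x ∈ U, HasMatGradientAt f (f' x) x)
    (hherm : ∀ x ∈ U, (f' x).IsHermitian)
    (L : ℝ) (hL : 0 < L)
    (hLip : ∀ x ∈ S, ∀ y ∈ S, ‖f' x - f' y‖ ≤ L * ‖x - y‖)
    (ρ : Mat d) (hρS : ρ ∈ S) (hρ : ρ.PosDef) (hρ1 : ρ.trace = 1)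
    (σ : Mat d) (hσS : σ ∈ S) (hσ : IsDensity σ) :
    0 ≤ f σ - f ρ - hsInner (f' ρ) (σ - ρ) ∧
      f σ - f ρ - hsInner (f' ρ) (σ - ρ) ≤ L * qRelEnt σ ρ := by
  set c : Mat d := σ - ρ with hc
  set g : ℝ → Mat d := fun t => ρ + t • c with hgdef
  have hg0 : g 0 = ρ := by simp [hgdef]
  have hg1 : g 1 = σ := by simp [hgdef, hc]
  have hgS : ∀ t ∈ Set.Icc (0:ℝ) 1, g t ∈ S := by
    intro t ht
    have h := hSconv hρS hσS (by linarith [ht.2] : (0:ℝ) ≤ 1 - t) ht.1 (by ring)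
    have heq : (1 - t) • ρ + t • σ = g t := by
      simp only [hgdef, hc]
      module
    rwa [heq] at h
  have hder : ∀ t : ℝ, g t ∈ U → HasDerivAt (fun s => f (g s)) (hsInner (f' (g t)) c) t := by
    intro t hmem
    obtain ⟨Lt, hF, hrep⟩ := hgrad (g t) hmem
    have hgder : HasDerivAt g c t := by
      have h1 : HasDerivAt (fun s : ℝ => s • c) ((1:ℝ) • c) t := (hasDerivAt_id t).smul_const c
      have h2 := h1.const_add ρ
      rw [one_smul] at h2
      exact h2
    have h3 := hF.comp_hasDerivAt t hgder
    have h4 : Lt c = hsInner (f' (g t)) c := hrep c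
    rw [← h4]
    exact h3
  have hρU : ρ ∈ U := hSU hρS
  -- lower bound
  have hlb : hsInner (f' ρ) c ≤ f σ - f ρ := by
    have hd0 : HasDerivAt (fun s => f (g s)) (hsInner (f' ρ) c) 0 := by
      have := hder 0 (by rw [hg0]; exact hρU)
      rwa [hg0] at this
    have hslope := hasDerivAt_iff_tendsto_slope.mp hd0
    have hslope' : Filter.Tendsto (slope (fun s => f (g s)) 0) (nhdsWithin 0 (Set.Ioi 0))
        (nhds (hsInner (f' ρ) c)) :=
      hslope.mono_left (nhdsWithin_mono 0 (fun x hx => ne_of_gt hx))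
    refine le_of_tendsto hslope' ?_
    filter_upwards [Ioc_mem_nhdsGT zero_lt_one] with t ht
    have hcvx := hconv.2 hρS hσS (by linarith [ht.2] : (0:ℝ) ≤ 1 - t) ht.1.le (by ring)
    have heq : (1 - t) • ρ + t • σ = g t := by
      simp only [hgdef, hc]; module
    rw [heq] at hcvx
    simp only [smul_eq_mul] at hcvx
    rw [slope_def_field, sub_zero, hg0, div_le_iff₀ ht.1]
    nlinarith [hcvx]
  -- upper bound
  set F : ℝ → ℝ := fun t => hsInner (f' (g t)) c with hFdef
  have hgsub : ∀ s t : ℝ, g s - g t = (s - t) • c := fun s t => by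
    simp only [hgdef]; module
  have hFd : ∀ s ∈ Set.Icc (0:ℝ) 1, ∀ t ∈ Set.Icc (0:ℝ) 1,
      dist (F s) (F t) ≤ (L * (‖c‖ * ‖c‖)) * dist s t := by
    intro s hs t ht
    rw [Real.dist_eq, Real.dist_eq]
    have hsub : F s - F t = hsInner (f' (g s) - f' (g t)) c := (hs_sub_left _ _ _).symm
    rw [hsub]
    have h1 := hs_abs_cs (f' (g s) - f' (g t)) c
    have h2 := hLip (g s) (hgS s hs) (g t) (hgS t ht)
    rw [hgsub s t, norm_smul, Real.norm_eq_abs] at h2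
    calc |hsInner (f' (g s) - f' (g t)) c| ≤ ‖f' (g s) - f' (g t)‖ * ‖c‖ := h1
      _ ≤ (L * (|s - t| * ‖c‖)) * ‖c‖ := mul_le_mul_of_nonneg_right h2 (norm_nonneg c)
      _ = (L * (‖c‖ * ‖c‖)) * |s - t| := by ring
  have hFcont : ContinuousOn F (Set.Icc 0 1) := by
    have hK : LipschitzOnWith (Real.toNNReal (L * (‖c‖ * ‖c‖))) F (Set.Icc 0 1) := by
      apply LipschitzOnWith.of_dist_le_mul
      intro x hx y hy
      refine (hFd x hx y hy).trans ?_
      exact mul_le_mul_of_nonneg_right (Real.le_coe_toNNReal _) dist_nonneg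
    exact hK.continuousOn
  have huIcc : Set.uIcc (0:ℝ) 1 = Set.Icc 0 1 := Set.uIcc_of_le zero_le_one
  have hint : IntervalIntegrable F MeasureTheory.volume 0 1 := by
    apply ContinuousOn.intervalIntegrable
    rwa [huIcc]
  have hftc : ∫ t in (0:ℝ)..1, F t = f σ - f ρ := by
    have h := intervalIntegral.integral_eq_sub_of_hasDerivAt
      (f := fun s => f (g s)) (f' := F)
      (fun t ht => hder t (hSU (hgS t (huIcc ▸ ht)))) hint
    simpa only [hg0, hg1] using h
  have hF0 : F 0 = hsInner (f' ρ) c := by simp only [hFdef]; rw [hg0]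
  have hptbound : ∀ t ∈ Set.Icc (0:ℝ) 1, F t - F 0 ≤ (L * (‖c‖ * ‖c‖)) * t := by
    intro t ht
    have hsub : F t - F 0 = hsInner (f' (g t) - f' (g 0)) c := (hs_sub_left _ _ _).symm
    rw [hsub]
    have h2 := hLip (g t) (hgS t ht) (g 0) (hgS 0 ⟨le_refl 0, zero_le_one⟩)
    rw [hgsub t 0, sub_zero, norm_smul, Real.norm_eq_abs, abs_of_nonneg ht.1] at h2
    calc hsInner (f' (g t) - f' (g 0)) c ≤ ‖f' (g t) - f' (g 0)‖ * ‖c‖ :=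
          hs_cs (f' (g t) - f' (g 0)) c
      _ ≤ (L * (t * ‖c‖)) * ‖c‖ := mul_le_mul_of_nonneg_right h2 (norm_nonneg c)
      _ = (L * (‖c‖ * ‖c‖)) * t := by ring
  have hintsub : IntervalIntegrable (fun t => F t - F 0) MeasureTheory.volume 0 1 :=
    hint.sub intervalIntegrable_const
  have hintlin : IntervalIntegrable (fun t => (L * (‖c‖ * ‖c‖)) * t) MeasureTheory.volume 0 1 :=
    (continuous_const.mul continuous_id).intervalIntegrable _ _
  have hmono := intervalIntegral.integral_mono_on zero_le_one hintsub hintlin hptbound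
  have hI1 : ∫ t in (0:ℝ)..1, (F t - F 0) = (f σ - f ρ) - F 0 := by
    rw [intervalIntegral.integral_sub hint intervalIntegrable_const, hftc,
      intervalIntegral.integral_const]
    simp
  have hI2 : ∫ t in (0:ℝ)..1, (L * (‖c‖ * ‖c‖)) * t = (L * (‖c‖ * ‖c‖)) / 2 := by
    rw [intervalIntegral.integral_const_mul, integral_id]
    norm_num
    try ring
  rw [hI1, hI2, hF0] at hmono
  have hpins := pinsker σ ρ hσ hρ hρ1
  have hpins' := mul_le_mul_of_nonneg_left hpins hL.le
  constructor
  · linarith [hlb]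
  · have hub : f σ - f ρ - hsInner (f' ρ) c ≤ L * (‖c‖ ^ 2 / 2) := by
      nlinarith [hmono, sq_nonneg ‖c‖, sq_abs ‖c‖]
    calc f σ - f ρ - hsInner (f' ρ) c ≤ L * (‖c‖ ^ 2 / 2) := hub
      _ = L * (‖σ - ρ‖ ^ 2 / 2) := by rw [hc]
      _ ≤ L * qRelEnt σ ρ := hpins'

end
end

section
/- (Peierls–Bogoliubov inequality.) Let A and B be Hermitian d×d complex matrices. Then the function Φ : ℝ → ℝ defined by Φ(t) := log tr exp(A + tB) (where tr exp(A + tB) is a positive real number since A + tB is Hermitian) is convex on ℝ. -/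
open scoped Matrix ComplexOrder

noncomputable section

namespace PB

open Matrix Finset

variable {d : ℕ}

/-- Trace of `cfc f M` is the sum of `f` over eigenvalues. -/
lemma trace_cfc_re {M : Mat d} (hM : M.IsHermitian) (f : ℝ → ℝ) :
    (Matrix.trace (cfc f M)).re = ∑ i, f (hM.eigenvalues i) := by
  rw [hM.cfc_eq, Matrix.IsHermitian.cfc, Unitary.conjStarAlgAut_apply, Matrix.trace_mul_cycle,
    Matrix.mem_unitaryGroup_iff'.mp hM.eigenvectorUnitary.2, one_mul, Matrix.trace_diagonal]
  simp

lemma smul_isHermitian {B : Mat d} (hB : B.IsHermitian) (t : ℝ) :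
    (t • B).IsHermitian := by
  unfold Matrix.IsHermitian
  rw [Matrix.conjTranspose_smul_non_comm]
  · rw [hB.eq]; norm_num
  · intro i j; simp [mul_comm]

/-- Peierls inequality: for any unitary `V` and Hermitian `K`,
`∑ᵢ exp (Re (V* K V)ᵢᵢ) ≤ tr (exp K)`. -/
lemma peierls {K : Mat d} (hK : K.IsHermitian) (V : Matrix.unitaryGroup (Fin d) ℂ) :
    ∑ i, Real.exp (((star (V : Mat d) * K * (V : Mat d)) i i).re)
      ≤ (Matrix.trace (mexp K)).re := by
  set W : Mat d := (hK.eigenvectorUnitary : Mat d) with hWdef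
  set P : Mat d := star W * (V : Mat d) with hPdef
  have hWmem : W ∈ Matrix.unitaryGroup (Fin d) ℂ := hK.eigenvectorUnitary.2
  have hPmem : P ∈ Matrix.unitaryGroup (Fin d) ℂ :=
    mul_mem (Unitary.star_mem hWmem) V.2
  have hP1 : star P * P = 1 := Matrix.mem_unitaryGroup_iff'.mp hPmem
  have hP2 : P * star P = 1 := Matrix.mem_unitaryGroup_iff.mp hPmem
  set c : Fin d → Fin d → ℝ := fun k i => Complex.normSq (P k i) with hcdef
  have hc0 : ∀ k i, 0 ≤ c k i := fun k i => Complex.normSq_nonneg _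
  have hcol : ∀ i, ∑ k, c k i = 1 := by
    intro i
    have h : (star P * P) i i = (1 : Mat d) i i := by rw [hP1]
    rw [Matrix.mul_apply, Matrix.one_apply_eq] at h
    have h2 : ∑ k, ((c k i : ℝ) : ℂ) = 1 := by
      rw [← h]
      refine Finset.sum_congr rfl fun k _ => ?_
      rw [Matrix.star_apply, hcdef]
      exact (Complex.normSq_eq_conj_mul_self).symm ▸ Complex.normSq_eq_conj_mul_self
    have := congrArg Complex.re h2
    simpa using this
  have hrow : ∀ k, ∑ i, c k i = 1 := by
    intro k
    have h : (P * star P) k k = (1 : Mat d) k k := by rw [hP2]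
    rw [Matrix.mul_apply, Matrix.one_apply_eq] at h
    have h2 : ∑ i, ((c k i : ℝ) : ℂ) = 1 := by
      rw [← h]
      refine Finset.sum_congr rfl fun i _ => ?_
      rw [Matrix.star_apply, hcdef, mul_comm]
      exact (Complex.normSq_eq_conj_mul_self).symm ▸ Complex.normSq_eq_conj_mul_self
    have := congrArg Complex.re h2
    simpa using this
  have hKeq : star (V : Mat d) * K * (V : Mat d)
      = star P * (Matrix.diagonal (RCLike.ofReal ∘ hK.eigenvalues) : Mat d) * P := by
    conv_lhs => rw [hK.spectral_theorem, Unitary.conjStarAlgAut_apply]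
    simp only [hPdef, Matrix.star_mul, star_star, Matrix.mul_assoc, ← hWdef]
  have entry : ∀ i, ((star (V : Mat d) * K * (V : Mat d)) i i).re
      = ∑ k, c k i * hK.eigenvalues k := by
    intro i
    rw [hKeq, Matrix.mul_apply]
    have : ∀ k, (star P * (Matrix.diagonal (RCLike.ofReal ∘ hK.eigenvalues) : Mat d)) i k * P k i
        = ((c k i * hK.eigenvalues k : ℝ) : ℂ) := by
      intro k
      have hnz : (starRingEnd ℂ) (P k i) * P k i = ((c k i : ℝ) : ℂ) :=
        Complex.normSq_eq_conj_mul_self.symm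
      simp only [Matrix.mul_diagonal, Matrix.star_apply, RCLike.star_def, Function.comp_apply]
      rw [mul_right_comm, hnz]
      exact (Complex.ofReal_mul _ _).symm
    rw [Finset.sum_congr rfl fun k _ => this k]
    rw [← Complex.ofReal_sum]
    simp
  calc ∑ i, Real.exp (((star (V : Mat d) * K * (V : Mat d)) i i).re)
      = ∑ i, Real.exp (∑ k, c k i * hK.eigenvalues k) := by
        exact Finset.sum_congr rfl fun i _ => by rw [entry]
    _ ≤ ∑ i, ∑ k, c k i * Real.exp (hK.eigenvalues k) := by
        refine Finset.sum_le_sum fun i _ => ?_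
        have := convexOn_exp.map_sum_le (t := Finset.univ) (w := fun k => c k i)
          (p := hK.eigenvalues) (fun k _ => hc0 k i) (hcol i) (fun k _ => Set.mem_univ _)
        simpa [smul_eq_mul] using this
    _ = ∑ k, (∑ i, c k i) * Real.exp (hK.eigenvalues k) := by
        rw [Finset.sum_comm]
        exact Finset.sum_congr rfl fun k _ => by rw [Finset.sum_mul]
    _ = ∑ k, Real.exp (hK.eigenvalues k) := by
        refine Finset.sum_congr rfl fun k _ => by rw [hrow k, one_mul]
    _ = (Matrix.trace (mexp K)).re := (trace_cfc_re hK Real.exp).symm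

end PB

/-- Peierls–Bogoliubov inequality: `t ↦ log tr exp (A + t B)` is convex. -/
theorem stmt_4 {d : ℕ} (hd : 0 < d) (A B : Mat d)
    (hA : A.IsHermitian) (hB : B.IsHermitian) :
    ConvexOn ℝ Set.univ
      (fun t : ℝ => Real.log ((Matrix.trace (mexp (A + t • B))).re)) := by
  have : Nonempty (Fin d) := ⟨⟨0, hd⟩⟩
  have herm : ∀ t : ℝ, (A + t • B).IsHermitian := fun t => hA.add (PB.smul_isHermitian hB t)
  set F : ℝ → ℝ := fun t => (Matrix.trace (mexp (A + t • B))).re with hFdef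
  have hFeq : ∀ t : ℝ, F t = ∑ i, Real.exp ((herm t).eigenvalues i) := fun t =>
    PB.trace_cfc_re (herm t) Real.exp
  have hFpos : ∀ t : ℝ, 0 < F t := by
    intro t
    rw [hFeq t]
    exact Finset.sum_pos (fun i _ => Real.exp_pos _) Finset.univ_nonempty
  refine ⟨convex_univ, ?_⟩
  rintro s - t - la mu hla hmu hlamu
  rcases eq_or_lt_of_le hla with h0 | hla
  · have : mu = 1 := by linarith
    simp [← h0, this]
  rcases eq_or_lt_of_le hmu with h0 | hmu
  · have : la = 1 := by linarith
    simp [← h0, this]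
  simp only [smul_eq_mul]
  -- the midpoint Hermitian matrix and its eigenbasis
  set m : ℝ := la * s + mu * t with hmdef
  set hm := herm m
  set V := hm.eigenvectorUnitary with hVdef
  have hVmem : (V : Mat d) ∈ Matrix.unitaryGroup (Fin d) ℂ := V.2
  have hdiag : star (V : Mat d) * (A + m • B) * (V : Mat d)
      = Matrix.diagonal (RCLike.ofReal ∘ hm.eigenvalues) := by
    conv_lhs => rw [hm.spectral_theorem, Unitary.conjStarAlgAut_apply]
    rw [← Matrix.mul_assoc, ← Matrix.mul_assoc,
      Matrix.mem_unitaryGroup_iff'.mp hVmem, one_mul, Matrix.mul_assoc,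
      Matrix.mem_unitaryGroup_iff'.mp hVmem, mul_one]
  have hcomb : A + m • B = la • (A + s • B) + mu • (A + t • B) := by
    rw [smul_add, smul_add, smul_smul, smul_smul, add_add_add_comm, ← add_smul, hlamu,
      one_smul, ← add_smul, hmdef]
  set a : Fin d → ℝ := fun i => ((star (V : Mat d) * (A + s • B) * (V : Mat d)) i i).re with hadef
  set b : Fin d → ℝ := fun i => ((star (V : Mat d) * (A + t • B) * (V : Mat d)) i i).re with hbdef
  have heig : ∀ i, hm.eigenvalues i = la * a i + mu * b i := by
    intro i
    have h1 : ((star (V : Mat d) * (A + m • B) * (V : Mat d)) i i).re = hm.eigenvalues i := by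
      rw [hdiag]
      simp [Matrix.diagonal_apply_eq]
    rw [← h1, hcomb]
    rw [Matrix.mul_add, Matrix.add_mul, Matrix.mul_smul, Matrix.mul_smul,
      Matrix.smul_mul, Matrix.smul_mul]
    simp [Matrix.add_apply, Matrix.smul_apply, Complex.smul_re]
    rfl
  -- Hölder step
  have hpq : Real.HolderConjugate la⁻¹ mu⁻¹ := by
    rw [Real.holderConjugate_iff]
    constructor
    · rw [lt_inv_comm₀ one_pos hla]
      · simpa using by linarith
    · rw [inv_inv, inv_inv]; exact hlamu
  have holder : ∑ i, Real.exp (la * a i + mu * b i)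
      ≤ (∑ i, Real.exp (a i)) ^ la * (∑ i, Real.exp (b i)) ^ mu := by
    have key := Real.inner_le_Lp_mul_Lq_of_nonneg Finset.univ hpq
      (f := fun i => Real.exp (a i) ^ la) (g := fun i => Real.exp (b i) ^ mu)
      (fun i _ => Real.rpow_nonneg (Real.exp_pos _).le _)
      (fun i _ => Real.rpow_nonneg (Real.exp_pos _).le _)
    have e1 : ∀ i, Real.exp (a i) ^ la * Real.exp (b i) ^ mu
        = Real.exp (la * a i + mu * b i) := by
      intro i
      rw [Real.exp_add, mul_comm la (a i), mul_comm mu (b i), Real.exp_mul, Real.exp_mul]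
    have e2 : ∀ (x : ℝ) (l : ℝ), 0 < l → (Real.exp x ^ l) ^ l⁻¹ = Real.exp x := by
      intro x l hl
      rw [← Real.rpow_mul (Real.exp_pos _).le, mul_inv_cancel₀ hl.ne', Real.rpow_one]
    calc ∑ i, Real.exp (la * a i + mu * b i)
        = ∑ i, Real.exp (a i) ^ la * Real.exp (b i) ^ mu :=
          Finset.sum_congr rfl fun i _ => (e1 i).symm
      _ ≤ (∑ i, (Real.exp (a i) ^ la) ^ la⁻¹) ^ (1 / la⁻¹)
            * (∑ i, (Real.exp (b i) ^ mu) ^ mu⁻¹) ^ (1 / mu⁻¹) := key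
      _ = (∑ i, Real.exp (a i)) ^ la * (∑ i, Real.exp (b i)) ^ mu := by
          rw [one_div, inv_inv, one_div, inv_inv]
          congr 1
          · congr 1; exact Finset.sum_congr rfl fun i _ => e2 _ _ hla
          · congr 1; exact Finset.sum_congr rfl fun i _ => e2 _ _ hmu
  have peiA : ∑ i, Real.exp (a i) ≤ F s := PB.peierls (herm s) V
  have peiB : ∑ i, Real.exp (b i) ≤ F t := PB.peierls (herm t) V
  have hsumApos : 0 < ∑ i, Real.exp (a i) :=
    Finset.sum_pos (fun i _ => Real.exp_pos _) Finset.univ_nonempty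
  have hsumBpos : 0 < ∑ i, Real.exp (b i) :=
    Finset.sum_pos (fun i _ => Real.exp_pos _) Finset.univ_nonempty
  have hmain : F m ≤ (F s) ^ la * (F t) ^ mu := by
    calc F m = ∑ i, Real.exp (la * a i + mu * b i) := by
          rw [hFeq m]; exact Finset.sum_congr rfl fun i _ => by rw [heig i]
      _ ≤ (∑ i, Real.exp (a i)) ^ la * (∑ i, Real.exp (b i)) ^ mu := holder
      _ ≤ (F s) ^ la * (F t) ^ mu := by
          apply mul_le_mul
          · exact Real.rpow_le_rpow hsumApos.le peiA hla.le
          · exact Real.rpow_le_rpow hsumBpos.le peiB hmu.le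
          · exact Real.rpow_nonneg hsumBpos.le _
          · exact Real.rpow_nonneg (hFpos s).le _
  have := Real.log_le_log (hFpos m) hmain
  rw [Real.log_mul (Real.rpow_pos_of_pos (hFpos s) _).ne'
      (Real.rpow_pos_of_pos (hFpos t) _).ne',
    Real.log_rpow (hFpos s), Real.log_rpow (hFpos t)] at this
  exact this

end
end

section
/- Let A and B be Hermitian d×d complex matrices and define Φ : ℝ → ℝ by Φ(t) := log tr exp(A + tB). Then Φ is strictly convex on ℝ if and only if B is not a real scalar multiple of the identity matrix; equivalently, if B = κI for some κ ∈ ℝ then Φ is affine, and if B ≠ κI for every κ ∈ ℝ then Φ is strictly convex. -/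
open scoped Matrix ComplexOrder

noncomputable section

namespace Aux

variable {d : ℕ}

lemma contOn {A : Mat d} (f : ℝ → ℝ) : ContinuousOn f (spectrum ℝ A) :=
  Matrix.finite_real_spectrum.continuousOn f

lemma contOn' {A : Mat d} (f g : ℝ → ℝ) : ContinuousOn f (g '' spectrum ℝ A) :=
  (Matrix.finite_real_spectrum.image g).continuousOn f

lemma trace_cfc' {A : Mat d} (hA : A.IsHermitian) (f : ℝ → ℝ) :
    (cfc f A).trace = ((∑ i, f (hA.eigenvalues i) : ℝ) : ℂ) := by
  rw [hA.cfc_eq, Matrix.IsHermitian.cfc, Unitary.conjStarAlgAut_apply, Matrix.trace_mul_cycle]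
  have : (star hA.eigenvectorUnitary : Mat d) * (hA.eigenvectorUnitary : Mat d) = 1 := by
    simp [Unitary.star_mul_self_of_mem]
  rw [this, Matrix.one_mul, Matrix.trace_diagonal]
  push_cast
  rfl

lemma trace_cfc_mul {A B : Mat d} (hA : A.IsHermitian) (hB : B.IsHermitian) (f g : ℝ → ℝ) :
    ((cfc f A * cfc g B).trace) =
      ((∑ i, ∑ j, f (hA.eigenvalues i) * g (hB.eigenvalues j) *
        Complex.normSq (((star hA.eigenvectorUnitary : Mat d) * (hB.eigenvectorUnitary : Mat d)) i j) : ℝ) : ℂ) := by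
  rw [hA.cfc_eq, hB.cfc_eq, Matrix.IsHermitian.cfc, Matrix.IsHermitian.cfc,
    Unitary.conjStarAlgAut_apply, Unitary.conjStarAlgAut_apply]
  set U : Mat d := (hA.eigenvectorUnitary : Mat d) with hU
  set V : Mat d := (hB.eigenvectorUnitary : Mat d) with hV
  set W : Mat d := star U * V with hW
  set Df : Mat d := Matrix.diagonal (RCLike.ofReal ∘ f ∘ hA.eigenvalues) with hDf
  set Dg : Mat d := Matrix.diagonal (RCLike.ofReal ∘ g ∘ hB.eigenvalues) with hDg
  have key : (U * Df * star U) * (V * Dg * star V) =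
      U * (Df * (W * Dg * star W)) * star U := by
    have hUUs : U * star U = 1 := by simp [hU, Unitary.mul_star_self_of_mem]
    simp only [hW, Matrix.mul_assoc, star_mul, star_star, hUUs, Matrix.mul_one]
  rw [key, Matrix.trace_mul_cycle, ← Matrix.mul_assoc]
  have hUU : star U * U = 1 := by
    simp [hU, Unitary.star_mul_self_of_mem]
  rw [hUU, Matrix.one_mul]
  have : ∀ i j, (W i j) * (star W) j i = (Complex.normSq (W i j) : ℂ) := by
    intro i j
    simp [Matrix.star_apply, Complex.mul_conj]
  simp only [Matrix.trace, Matrix.diag_apply, Matrix.mul_apply, hDf, hDg,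
    Matrix.diagonal_apply, Function.comp_apply, ite_mul, zero_mul, mul_ite, mul_zero,
    Finset.sum_ite_eq, Finset.sum_ite_eq', Finset.mem_univ, if_true]
  push_cast
  congr 1
  ext i
  rw [Finset.mul_sum]
  congr 1
  ext j
  rw [mul_comm (W i j), mul_assoc, this i j]
  norm_cast
  simp [Complex.ofReal_mul, mul_assoc]

/-- sum of eigenvalues is the trace -/
lemma sum_eig {A : Mat d} (hA : A.IsHermitian) :
    ((∑ i, hA.eigenvalues i : ℝ) : ℂ) = A.trace := by
  have := trace_cfc' hA id
  have h2 : cfc (id : ℝ → ℝ) A = A := cfc_id ℝ A hA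
  rw [h2] at this
  simpa using this.symm

/-- the relative unitary between two Hermitian matrices -/
def relW {A B : Mat d} (hA : A.IsHermitian) (hB : B.IsHermitian) : Mat d :=
  (star hA.eigenvectorUnitary : Mat d) * (hB.eigenvectorUnitary : Mat d)

lemma relW_mul_star {A B : Mat d} (hA : A.IsHermitian) (hB : B.IsHermitian) :
    relW hA hB * star (relW hA hB) = 1 := by
  unfold relW
  rw [star_mul, star_star, Matrix.mul_assoc, ← Matrix.mul_assoc (hB.eigenvectorUnitary : Mat d)]
  simp [Unitary.mul_star_self_of_mem, Unitary.star_mul_self_of_mem]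

lemma star_relW_mul {A B : Mat d} (hA : A.IsHermitian) (hB : B.IsHermitian) :
    star (relW hA hB) * relW hA hB = 1 := by
  unfold relW
  rw [star_mul, star_star, Matrix.mul_assoc, ← Matrix.mul_assoc (hA.eigenvectorUnitary : Mat d)]
  simp [Unitary.mul_star_self_of_mem, Unitary.star_mul_self_of_mem]

lemma relW_row_sum {A B : Mat d} (hA : A.IsHermitian) (hB : B.IsHermitian) (i : Fin d) :
    ∑ j, Complex.normSq (relW hA hB i j) = 1 := by
  have h := congrFun (congrFun (relW_mul_star hA hB) i) i
  have : ∀ j, relW hA hB i j * star (relW hA hB) j i = (Complex.normSq (relW hA hB i j) : ℂ) := by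
    intro j; simp [Matrix.star_apply, Complex.mul_conj]
  rw [Matrix.mul_apply] at h
  simp only [this] at h
  rw [Matrix.one_apply_eq] at h
  exact_mod_cast h

lemma relW_col_sum {A B : Mat d} (hA : A.IsHermitian) (hB : B.IsHermitian) (j : Fin d) :
    ∑ i, Complex.normSq (relW hA hB i j) = 1 := by
  have h := congrFun (congrFun (star_relW_mul hA hB) j) j
  have : ∀ i, star (relW hA hB) j i * relW hA hB i j = (Complex.normSq (relW hA hB i j) : ℂ) := by
    intro i; simp [Matrix.star_apply, Complex.mul_conj, mul_comm]
  rw [Matrix.mul_apply] at h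
  simp only [this] at h
  rw [Matrix.one_apply_eq] at h
  exact_mod_cast h


/-- pointwise Klein term inequality -/
lemma kl_term {a b : ℝ} (ha : 0 < a) (hb : 0 < b) :
    a - b ≤ a * Real.log a - a * Real.log b ∧
      (a * Real.log a - a * Real.log b = a - b → a = b) := by
  have hlog : Real.log (b / a) ≤ b / a - 1 := Real.log_le_sub_one_of_pos (by positivity)
  have hd : Real.log (b / a) = Real.log b - Real.log a := Real.log_div hb.ne' ha.ne'
  have k1 : a * Real.log (b / a) = a * Real.log b - a * Real.log a := by rw [hd]; ring
  have k2 : a * (b / a - 1) = b - a := by field_simp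
  constructor
  · have := mul_le_mul_of_nonneg_left hlog ha.le
    linarith
  · intro h
    by_contra hne
    have h1 : b / a ≠ 1 := by
      intro hc
      rw [div_eq_one_iff_eq ha.ne'] at hc
      exact hne hc.symm
    have hstrict : Real.log (b / a) < b / a - 1 := Real.log_lt_sub_one_of_pos (by positivity) h1
    have := mul_lt_mul_of_pos_left hstrict ha
    linarith

/-- Klein inequality, scalar form. -/
lemma klein_real {p q : Fin d → ℝ} {P : Fin d → Fin d → ℝ}
    (hp : ∀ i, 0 < p i) (hq : ∀ j, 0 < q j) (hP : ∀ i j, 0 ≤ P i j)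
    (hrow : ∀ i, ∑ j, P i j = 1) (hcol : ∀ j, ∑ i, P i j = 1)
    (hps : ∑ i, p i = 1) (hqs : ∑ j, q j = 1) :
    (∑ i, ∑ j, P i j * (p i * Real.log (q j))) ≤ ∑ i, p i * Real.log (p i) ∧
      ((∑ i, ∑ j, P i j * (p i * Real.log (q j))) = ∑ i, p i * Real.log (p i) →
        ∀ i j, P i j ≠ 0 → p i = q j) := by
  set F : Fin d → Fin d → ℝ :=
    fun i j => P i j * ((p i * Real.log (p i) - p i * Real.log (q j)) - (p i - q j)) with hF
  have hFnn : ∀ i j, 0 ≤ F i j := fun i j =>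
    mul_nonneg (hP i j) (by have := (kl_term (hp i) (hq j)).1; linarith)
  have hsum : ∑ i, ∑ j, F i j =
      (∑ i, p i * Real.log (p i)) - (∑ i, ∑ j, P i j * (p i * Real.log (q j))) := by
    have e1 : ∑ i, ∑ j, P i j * (p i * Real.log (p i)) = ∑ i, p i * Real.log (p i) := by
      refine Finset.sum_congr rfl fun i _ => ?_
      rw [← Finset.sum_mul, hrow i, one_mul]
    have e2 : ∑ i, ∑ j, P i j * p i = 1 := by
      have : ∀ i, ∑ j, P i j * p i = p i := fun i => by rw [← Finset.sum_mul, hrow i, one_mul]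
      simp [this, hps]
    have e3 : ∑ i, ∑ j, P i j * q j = 1 := by
      rw [Finset.sum_comm]
      have : ∀ j, ∑ i, P i j * q j = q j := fun j => by rw [← Finset.sum_mul, hcol j, one_mul]
      simp [this, hqs]
    simp only [hF, mul_sub]
    simp only [Finset.sum_sub_distrib]
    rw [e1, e2, e3]
    ring
  constructor
  · have : 0 ≤ ∑ i, ∑ j, F i j :=
      Finset.sum_nonneg fun i _ => Finset.sum_nonneg fun j _ => hFnn i j
    linarith [hsum]
  · intro heq i j hPij
    have hzero : ∑ i, ∑ j, F i j = 0 := by rw [hsum]; linarith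
    have hall : ∀ i ∈ Finset.univ, ∀ j ∈ Finset.univ, F i j = 0 := by
      intro i _ j _
      have h1 : ∑ i ∈ Finset.univ, (∑ j, F i j) = 0 := hzero
      have h2 : ∀ i ∈ Finset.univ, (0:ℝ) ≤ ∑ j, F i j :=
        fun i _ => Finset.sum_nonneg fun j _ => hFnn i j
      have h3 : ∑ j, F i j = 0 :=
        (Finset.sum_eq_zero_iff_of_nonneg h2).mp h1 i (Finset.mem_univ i)
      exact (Finset.sum_eq_zero_iff_of_nonneg (fun j _ => hFnn i j)).mp h3 j (Finset.mem_univ j)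
    have hFij : F i j = 0 := hall i (Finset.mem_univ i) j (Finset.mem_univ j)
    rw [hF] at hFij
    have : (p i * Real.log (p i) - p i * Real.log (q j)) - (p i - q j) = 0 := by
      rcases mul_eq_zero.mp hFij with h | h
      · exact absurd h hPij
      · exact h
    exact (kl_term (hp i) (hq j)).2 (by linarith)


lemma klein_matrix {σ τ : Mat d} (hσ : σ.IsHermitian) (hτ : τ.IsHermitian)
    (hσp : ∀ i, 0 < hσ.eigenvalues i) (hτp : ∀ i, 0 < hτ.eigenvalues i)
    (hσ1 : ∑ i, hσ.eigenvalues i = 1) (hτ1 : ∑ i, hτ.eigenvalues i = 1) :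
    (Matrix.trace (σ * mlog τ)).re ≤ (Matrix.trace (σ * mlog σ)).re ∧
      ((Matrix.trace (σ * mlog τ)).re = (Matrix.trace (σ * mlog σ)).re → σ = τ) := by
  set p := hσ.eigenvalues with hpdef
  set q := hτ.eigenvalues with hqdef
  set P : Fin d → Fin d → ℝ := fun i j => Complex.normSq (relW hσ hτ i j) with hPdef
  have hidσ : cfc (id : ℝ → ℝ) σ = σ := cfc_id ℝ σ hσ
  have h1 : (Matrix.trace (σ * mlog σ)).re = ∑ i, p i * Real.log (p i) := by
    have e : σ * mlog σ = cfc (id : ℝ → ℝ) σ * cfc Real.log σ := by rw [hidσ, mlog]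
    rw [e, trace_cfc_mul hσ hσ id Real.log]
    rw [Complex.ofReal_re]
    have hW : ((star hσ.eigenvectorUnitary : Mat d) * (hσ.eigenvectorUnitary : Mat d)) = 1 := by
      simp [Unitary.star_mul_self_of_mem]
    rw [hW]
    rw [Finset.sum_congr rfl fun i _ => Finset.sum_eq_single i
      (fun b _ hb => by simp [Matrix.one_apply_ne' hb])
      (by simp)]
    simp [Matrix.one_apply_eq]
    rfl
  have h2 : (Matrix.trace (σ * mlog τ)).re = ∑ i, ∑ j, P i j * (p i * Real.log (q j)) := by
    have e : σ * mlog τ = cfc (id : ℝ → ℝ) σ * cfc Real.log τ := by rw [hidσ, mlog]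
    rw [e, trace_cfc_mul hσ hτ id Real.log, Complex.ofReal_re]
    refine Finset.sum_congr rfl fun i _ => Finset.sum_congr rfl fun j _ => ?_
    simp only [hPdef, relW, id_eq]
    ring
  have hK := klein_real hσp hτp (fun i j => Complex.normSq_nonneg _)
    (relW_row_sum hσ hτ) (relW_col_sum hσ hτ) hσ1 hτ1
  constructor
  · rw [h1, h2]; exact hK.1
  · intro heq
    rw [h1, h2] at heq
    have hpq := hK.2 heq
    -- convert to matrix equality
    set U : Mat d := (hσ.eigenvectorUnitary : Mat d) with hU
    set V : Mat d := (hτ.eigenvectorUnitary : Mat d) with hV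
    set W : Mat d := relW hσ hτ with hW
    have hWe : W = star U * V := rfl
    have hentry : ∀ i j, (p i : ℂ) * W i j = W i j * (q j : ℂ) := by
      intro i j
      by_cases h0 : P i j = 0
      · have : W i j = 0 := by
          have := Complex.normSq_eq_zero.mp h0
          exact this
        simp [this]
      · rw [hpq i j h0]; ring
    have hDW : Matrix.diagonal (RCLike.ofReal ∘ p) * W = W * Matrix.diagonal (RCLike.ofReal ∘ q) := by
      ext i j
      rw [Matrix.diagonal_mul, Matrix.mul_diagonal]
      exact hentry i j
    have hUs : U * star U = 1 := by simp [hU, Unitary.mul_star_self_of_mem]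
    have hVs : V * star V = 1 := by simp [hV, Unitary.mul_star_self_of_mem]
    have hstarU : star U = W * star V := by
      rw [hWe, Matrix.mul_assoc, hVs, Matrix.mul_one]
    calc σ = U * Matrix.diagonal (RCLike.ofReal ∘ p) * star U := hσ.spectral_theorem
      _ = U * (Matrix.diagonal (RCLike.ofReal ∘ p) * W) * star V := by
          rw [hstarU]; simp only [Matrix.mul_assoc]
      _ = (U * W) * Matrix.diagonal (RCLike.ofReal ∘ q) * star V := by
          rw [hDW]; simp only [Matrix.mul_assoc]
      _ = V * Matrix.diagonal (RCLike.ofReal ∘ q) * star V := by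
          rw [hWe, ← Matrix.mul_assoc, hUs, Matrix.one_mul]
      _ = τ := hτ.spectral_theorem.symm


noncomputable def Zf (H : Mat d) : ℝ := (Matrix.trace (mexp H)).re

lemma Zf_eq {H : Mat d} (hH : H.IsHermitian) : Zf H = ∑ i, Real.exp (hH.eigenvalues i) := by
  rw [Zf, mexp, trace_cfc' hH, Complex.ofReal_re]

lemma Zf_pos (hd : 0 < d) {H : Mat d} (hH : H.IsHermitian) : 0 < Zf H := by
  rw [Zf_eq hH]
  have : Nonempty (Fin d) := ⟨⟨0, hd⟩⟩
  exact Finset.sum_pos (fun i _ => Real.exp_pos _) Finset.univ_nonempty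

noncomputable def gibbs (H : Mat d) : Mat d := cfc (fun x => Real.exp x / Zf H) H

lemma gibbs_herm (H : Mat d) : (gibbs H).IsHermitian := cfc_predicate _ H

lemma gibbs_eig_pos (hd : 0 < d) {H : Mat d} (hH : H.IsHermitian)
    (hG : (gibbs H).IsHermitian) (i : Fin d) : 0 < hG.eigenvalues i := by
  have hmem := hG.eigenvalues_mem_spectrum_real i
  have hspec : spectrum ℝ (gibbs H) = (fun x => Real.exp x / Zf H) '' spectrum ℝ H :=
    cfc_map_spectrum _ _ hH (contOn _)
  rw [hspec] at hmem
  obtain ⟨x, -, hx⟩ := hmem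
  rw [← hx]
  exact div_pos (Real.exp_pos x) (Zf_pos hd hH)

lemma gibbs_trace (hd : 0 < d) {H : Mat d} (hH : H.IsHermitian) :
    (gibbs H).trace = 1 := by
  rw [gibbs, trace_cfc' hH, ← Finset.sum_div, ← Zf_eq hH, div_self (Zf_pos hd hH).ne']
  simp

lemma gibbs_eig_sum (hd : 0 < d) {H : Mat d} (hH : H.IsHermitian)
    (hG : (gibbs H).IsHermitian) : ∑ i, hG.eigenvalues i = 1 := by
  have h := sum_eig hG
  rw [gibbs_trace hd hH] at h
  exact_mod_cast h

lemma mlog_gibbs (hd : 0 < d) {H : Mat d} (hH : H.IsHermitian) :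
    mlog (gibbs H) = H - (Real.log (Zf H)) • (1 : Mat d) := by
  have e : cfc Real.log (cfc (fun x => Real.exp x / Zf H) H)
      = cfc (Real.log ∘ fun x => Real.exp x / Zf H) H :=
    (cfc_comp Real.log (fun x => Real.exp x / Zf H) H hH (contOn' _ _) (contOn _)).symm
  rw [mlog, gibbs, e]
  have hfun : Real.log ∘ (fun x => Real.exp x / Zf H) = fun x => x - Real.log (Zf H) := by
    funext x
    simp [Function.comp, Real.log_div (Real.exp_ne_zero x) (Zf_pos hd hH).ne', Real.log_exp]
  rw [hfun, cfc_sub (fun x => x) (fun _ => Real.log (Zf H)) H (contOn _) (contOn _)]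
  congr 1
  · exact cfc_id' ℝ H hH
  · exact (cfc_const _ _ hH).trans (Algebra.algebraMap_eq_smul_one _)

/-- matrix shifted by a real multiple of the identity -/
lemma cfc_shift {A : Mat d} (hA : A.IsHermitian) (c : ℝ) :
    cfc (fun x => x + c) A = A + c • (1 : Mat d) := by
  have e : cfc (fun x : ℝ => x + c) A = cfc (fun x : ℝ => x) A + cfc (fun _ : ℝ => c) A :=
    cfc_add (a := A) (fun x => x) (fun _ => c) (contOn _) (contOn _)
  rw [e]
  congr 1
  · exact cfc_id' ℝ A hA
  · exact (cfc_const _ _ hA).trans (Algebra.algebraMap_eq_smul_one _)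

lemma Zf_shift {A : Mat d} (hA : A.IsHermitian) (c : ℝ) :
    Zf (A + c • (1 : Mat d)) = Real.exp c * Zf A := by
  have h1 : mexp (A + c • (1 : Mat d)) = cfc (Real.exp ∘ (fun x => x + c)) A := by
    rw [mexp, ← cfc_shift hA c]
    exact (cfc_comp Real.exp (fun x => x + c) A hA (contOn' _ _) (contOn _)).symm
  rw [Zf, h1, trace_cfc' hA, Complex.ofReal_re, Zf_eq hA, Finset.mul_sum]
  refine Finset.sum_congr rfl fun i _ => ?_
  simp [Function.comp, Real.exp_add, mul_comm]


lemma herm_comb {A B : Mat d} (hA : A.IsHermitian) (hB : B.IsHermitian) (u : ℝ) :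
    (A + u • B).IsHermitian := by
  have h1 : (u • B).IsHermitian := by
    unfold Matrix.IsHermitian
    rw [Matrix.conjTranspose_smul, star_trivial, hB.eq]
  exact hA.add h1

lemma trace_gibbs_mlog_gibbs (hd : 0 < d) {H K : Mat d} (hH : H.IsHermitian) (hK : K.IsHermitian) :
    (Matrix.trace (gibbs H * mlog (gibbs K))).re
      = (Matrix.trace (gibbs H * K)).re - Real.log (Zf K) := by
  rw [mlog_gibbs hd hK, Matrix.mul_sub]
  have h1 : gibbs H * (Real.log (Zf K) • (1 : Mat d)) = Real.log (Zf K) • gibbs H := by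
    rw [Matrix.mul_smul, Matrix.mul_one]
  rw [h1, Matrix.trace_sub, Matrix.trace_smul, gibbs_trace hd hH]
  simp [Complex.real_smul]

lemma gibbs_bound (hd : 0 < d) {H K : Mat d} (hH : H.IsHermitian) (hK : K.IsHermitian) :
    ((Matrix.trace (gibbs H * K)).re - (Matrix.trace (gibbs H * mlog (gibbs H))).re
      ≤ Real.log (Zf K)) ∧
    (gibbs H ≠ gibbs K →
      (Matrix.trace (gibbs H * K)).re - (Matrix.trace (gibbs H * mlog (gibbs H))).re
        < Real.log (Zf K)) := by
  have hkm := klein_matrix (gibbs_herm H) (gibbs_herm K)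
    (gibbs_eig_pos hd hH _) (gibbs_eig_pos hd hK _)
    (gibbs_eig_sum hd hH _) (gibbs_eig_sum hd hK _)
  have ht := trace_gibbs_mlog_gibbs hd hH hK
  constructor
  · linarith [hkm.1]
  · intro hne
    have hne2 : (Matrix.trace (gibbs H * mlog (gibbs K))).re
        ≠ (Matrix.trace (gibbs H * mlog (gibbs H))).re := fun h => hne (hkm.2 h)
    have := lt_of_le_of_ne hkm.1 hne2
    linarith

lemma gibbs_eq_extract (hd : 0 < d) {H K : Mat d} (hH : H.IsHermitian) (hK : K.IsHermitian)
    (h : gibbs H = gibbs K) :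
    H - K = (Real.log (Zf H) - Real.log (Zf K)) • (1 : Mat d) := by
  have h1 := congrArg mlog h
  rw [mlog_gibbs hd hH, mlog_gibbs hd hK] at h1
  have h2 : H - K = Real.log (Zf H) • (1 : Mat d) - Real.log (Zf K) • (1 : Mat d) :=
    sub_eq_sub_iff_sub_eq_sub.mp h1
  rw [h2, ← sub_smul]

lemma strict_core (hd : 0 < d) {A B : Mat d} (hA : A.IsHermitian) (hB : B.IsHermitian)
    (hBne : ∀ κ : ℝ, B ≠ κ • (1 : Mat d)) (Φ : ℝ → ℝ)
    (hΦ : ∀ t : ℝ, Φ t = Real.log ((Matrix.trace (mexp (A + t • B))).re)) :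
    StrictConvexOn ℝ Set.univ Φ := by
  have hH : ∀ u : ℝ, (A + u • B).IsHermitian := herm_comb hA hB
  have hΦu : ∀ u : ℝ, Φ u = Real.log (Zf (A + u • B)) := fun u => hΦ u
  refine ⟨convex_univ, ?_⟩
  intro x _ y _ hxy a b ha hb hab
  simp only [smul_eq_mul]
  set m := a * x + b * y with hmdef
  set γ := gibbs (A + m • B) with hγdef
  set c1 := (Matrix.trace (γ * A)).re with hc1
  set c2 := (Matrix.trace (γ * B)).re with hc2
  set E := (Matrix.trace (γ * mlog γ)).re with hE
  have hlin : ∀ u : ℝ, (Matrix.trace (γ * (A + u • B))).re = c1 + u * c2 := by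
    intro u
    rw [Matrix.mul_add, Matrix.trace_add, Matrix.mul_smul, Matrix.trace_smul]
    simp [Complex.add_re, Complex.real_smul, Complex.re_ofReal_mul]
    rfl
  have hm : Φ m = c1 + m * c2 - E := by
    rw [hΦu m]
    have h := trace_gibbs_mlog_gibbs hd (hH m) (hH m)
    rw [hlin m] at h
    rw [← hγdef] at h
    linarith [h]
  have hbound : ∀ u : ℝ, c1 + u * c2 - E ≤ Φ u := by
    intro u
    rw [hΦu u]
    have h := (gibbs_bound hd (hH m) (hH u)).1
    rw [hlin u] at h
    linarith
  have hboundlt : ∀ u : ℝ, γ ≠ gibbs (A + u • B) → c1 + u * c2 - E < Φ u := by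
    intro u hne
    rw [hΦu u]
    have h := (gibbs_bound hd (hH m) (hH u)).2 hne
    rw [hlin u] at h
    linarith
  have hnotboth : γ ≠ gibbs (A + x • B) ∨ γ ≠ gibbs (A + y • B) := by
    by_contra hc
    push_neg at hc
    have h3 : gibbs (A + x • B) = gibbs (A + y • B) := hc.1.symm.trans hc.2
    have h4 := gibbs_eq_extract hd (hH x) (hH y) h3
    set r := Real.log (Zf (A + x • B)) - Real.log (Zf (A + y • B)) with hr
    have h5 : (x - y) • B = r • (1 : Mat d) := by
      rw [← h4, sub_smul]
      abel
    have hxy' : x - y ≠ 0 := sub_ne_zero.mpr hxy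
    apply hBne ((x - y)⁻¹ * r)
    rw [mul_smul, ← h5, smul_smul, inv_mul_cancel₀ hxy', one_smul]
  have hcomb : Φ m = a * (c1 + x * c2 - E) + b * (c1 + y * c2 - E) := by
    rw [hm]
    have : m = a * x + b * y := hmdef
    rw [this]
    linear_combination (E - c1) * hab
  rcases hnotboth with h | h
  · calc Φ m = a * (c1 + x * c2 - E) + b * (c1 + y * c2 - E) := hcomb
      _ < a * Φ x + b * Φ y :=
        add_lt_add_of_lt_of_le (mul_lt_mul_of_pos_left (hboundlt x h) ha)
          (mul_le_mul_of_nonneg_left (hbound y) hb.le)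
  · calc Φ m = a * (c1 + x * c2 - E) + b * (c1 + y * c2 - E) := hcomb
      _ < a * Φ x + b * Φ y :=
        add_lt_add_of_le_of_lt (mul_le_mul_of_nonneg_left (hbound x) ha.le)
          (mul_lt_mul_of_pos_left (hboundlt y h) hb)


end Aux

/-- `Φ(t) = log tr exp (A + t B)` is strictly convex iff `B` is not a real
multiple of the identity; and it is affine when `B = κ I`. -/
theorem stmt_5 {d : ℕ} (hd : 0 < d) (A B : Mat d)
    (hA : A.IsHermitian) (hB : B.IsHermitian)
    (Φ : ℝ → ℝ) (hΦ : ∀ t : ℝ, Φ t = Real.log ((Matrix.trace (mexp (A + t • B))).re)) :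
    (StrictConvexOn ℝ Set.univ Φ ↔ ¬∃ κ : ℝ, B = κ • (1 : Mat d)) ∧
      (∀ κ : ℝ, B = κ • (1 : Mat d) → ∃ a b : ℝ, ∀ t : ℝ, Φ t = a * t + b) ∧
      ((∀ κ : ℝ, B ≠ κ • (1 : Mat d)) → StrictConvexOn ℝ Set.univ Φ) := by
  have affine : ∀ κ : ℝ, B = κ • (1 : Mat d) → ∃ a b : ℝ, ∀ t : ℝ, Φ t = a * t + b := by
    intro κ hκ
    refine ⟨κ, Real.log (Aux.Zf A), fun t => ?_⟩
    have h1 : (Matrix.trace (mexp (A + t • B))).re = Aux.Zf (A + (t * κ) • (1 : Mat d)) := by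
      rw [hκ, smul_smul]
      rfl
    rw [hΦ t, h1, Aux.Zf_shift hA, Real.log_mul (Real.exp_ne_zero _) (Aux.Zf_pos hd hA).ne',
      Real.log_exp]
    ring
  have core : (∀ κ : ℝ, B ≠ κ • (1 : Mat d)) → StrictConvexOn ℝ Set.univ Φ :=
    fun h => Aux.strict_core hd hA hB h Φ hΦ
  refine ⟨⟨?_, fun h => core (fun κ hκ => h ⟨κ, hκ⟩)⟩, affine, core⟩
  intro hsc hex
  obtain ⟨κ, hκ⟩ := hex
  obtain ⟨a, b, hab⟩ := affine κ hκ
  have h2 := hsc.2 (Set.mem_univ (0:ℝ)) (Set.mem_univ (2:ℝ)) (by norm_num)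
    (by norm_num : (0:ℝ) < 1/2) (by norm_num : (0:ℝ) < 1/2) (by norm_num)
  have e : (1/2 : ℝ) • (0:ℝ) + (1/2 : ℝ) • (2:ℝ) = 1 := by norm_num
  rw [e, hab 0, hab 1, hab 2] at h2
  simp only [smul_eq_mul] at h2
  linarith

end
end

section
/- Let A and B be Hermitian d×d complex matrices and define Φ : ℝ → ℝ by Φ(t) := log tr exp(A + tB). Then Φ is twice differentiable on ℝ, and for every t ∈ ℝ, writing H_t := A + tB and ⟨X,Y⟩_BKM for the Bogoliubov–Kubo–Mori inner product with respect to H_t, one has Φ''(t) = ( ⟨B,B⟩_BKM · ⟨I,I⟩_BKM − ⟨I,B⟩_BKM² ) / ( tr exp(H_t) )². -/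
open scoped Matrix ComplexOrder

noncomputable section

/-- The Bogoliubov–Kubo–Mori inner product of `X` and `Y` with respect to the Hermitian
matrix `H`: `⟨X,Y⟩_BKM = ∫₀¹ tr (exp((1-u)H) X exp(uH) Y) du` (real for Hermitian `X, Y`). -/
noncomputable def bkm {d : ℕ} (H X Y : Mat d) : ℝ :=
  ∫ u in (0:ℝ)..(1:ℝ), (Matrix.trace (mexp ((1 - u) • H) * X * (mexp (u • H) * Y))).re

section aux
open NormedSpace MeasureTheory intervalIntegral
open scoped Matrix.Norms.L2Operator

variable {d : ℕ}

instance instNormedAlgebraRatMat : NormedAlgebra ℚ (Mat d) :=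
  { (inferInstance : Algebra ℚ (Mat d)) with
    norm_smul_le := fun q x => by
      rw [← algebraMap_smul ℂ q x, norm_smul]; simp [← Rat.norm_cast_real] }

lemma mexp_eq {M : Mat d} (hM : M.IsHermitian) : mexp M = exp M :=
  CFC.real_exp_eq_normedSpace_exp hM

lemma hermitian_smul {M : Mat d} (hM : M.IsHermitian) (r : ℝ) : (r • M).IsHermitian := by
  unfold Matrix.IsHermitian
  rw [Matrix.conjTranspose_smul, star_trivial, hM.eq]

lemma cexp1 (X : Mat d) : Continuous fun u : ℝ => exp ((1 - u) • X) :=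
  exp_continuous.comp ((continuous_const.sub continuous_id).smul continuous_const)

lemma cexp2 (X : Mat d) : Continuous fun u : ℝ => exp (u • X) :=
  exp_continuous.comp (continuous_id.smul continuous_const)

lemma duh (X Y : Mat d) :
    exp Y - exp X
      = ∫ u in (0:ℝ)..1, exp ((1 - u) • X) * (Y - X) * exp (u • Y) := by
  have hder : ∀ u ∈ Set.uIcc (0:ℝ) 1,
      HasDerivAt (fun u : ℝ => exp ((1 - u) • X) * exp (u • Y))
        (exp ((1 - u) • X) * (Y - X) * exp (u • Y)) u := by
    intro u _
    have ha : HasDerivAt (fun u : ℝ => 1 - u) (-1) u := (hasDerivAt_id u).const_sub 1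
    have h1 : HasDerivAt (fun u : ℝ => exp ((1 - u) • X))
        ((-1 : ℝ) • (exp ((1 - u) • X) * X)) u :=
      (hasDerivAt_exp_smul_const X ((1:ℝ) - u)).scomp u ha
    have h2 : HasDerivAt (fun u : ℝ => exp (u • Y)) (exp (u • Y) * Y) u :=
      hasDerivAt_exp_smul_const Y u
    have h3 := h1.mul h2
    refine h3.congr_deriv ?_
    have hc : Commute (exp (u • Y)) Y := ((Commute.refl Y).smul_left u).exp_left
    rw [neg_one_smul, hc.eq]
    noncomm_ring
  have hint : IntervalIntegrable
      (fun u : ℝ => exp ((1 - u) • X) * (Y - X) * exp (u • Y)) volume 0 1 :=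
    (((cexp1 X).mul continuous_const).mul (cexp2 Y)).intervalIntegrable 0 1
  rw [intervalIntegral.integral_eq_sub_of_hasDerivAt hder hint]
  simp

lemma key (A B : Mat d) (t : ℝ) :
    HasDerivAt (fun s : ℝ => exp (A + s • B))
      (∫ u in (0:ℝ)..1, exp ((1 - u) • (A + t • B)) * B * exp (u • (A + t • B))) t := by
  set Ψ : ℝ → Mat d :=
    fun s => ∫ u in (0:ℝ)..1, exp ((1 - u) • (A + t • B)) * B * exp (u • (A + s • B))
    with hΨ
  have hcont : Continuous Ψ := by
    apply intervalIntegral.continuous_parametric_intervalIntegral_of_continuous'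
    show Continuous fun p : ℝ × ℝ =>
      exp ((1 - p.2) • (A + t • B)) * B * exp (p.2 • (A + p.1 • B))
    refine ((Continuous.mul ?_ continuous_const).mul ?_)
    · exact exp_continuous.comp ((continuous_const.sub continuous_snd).smul continuous_const)
    · exact exp_continuous.comp
        (continuous_snd.smul (continuous_const.add (continuous_fst.smul continuous_const)))
  have hkey : ∀ s : ℝ, exp (A + s • B) - exp (A + t • B) = (s - t) • Ψ s := by
    intro s
    have h := duh (A + t • B) (A + s • B)
    have hYX : (A + s • B) - (A + t • B) = (s - t) • B := by
      rw [sub_smul]; abel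
    rw [hYX] at h
    rw [h, hΨ, ← intervalIntegral.integral_smul]
    congr 1
    funext u
    simp only [mul_smul_comm, smul_mul_assoc]
  rw [hasDerivAt_iff_tendsto_slope]
  show Filter.Tendsto _ _ (nhds (Ψ t))
  refine Filter.Tendsto.congr' ?_ (hcont.continuousAt.mono_left nhdsWithin_le_nhds)
  filter_upwards [self_mem_nhdsWithin] with s hs
  have hst : s - t ≠ 0 := sub_ne_zero.mpr hs
  rw [slope, vsub_eq_sub, hkey s, smul_smul, inv_mul_cancel₀ hst, one_smul]

/-- trace(· * C) as a continuous ℝ-linear map. -/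
def traceMulCLM (C : Mat d) : Mat d →L[ℝ] ℂ :=
  LinearMap.toContinuousLinearMap
    { toFun := fun M => Matrix.trace (M * C)
      map_add' := fun x y => by simp [Matrix.add_mul]
      map_smul' := fun r x => by simp [Matrix.smul_mul] }

lemma trace_deriv (A B C : Mat d) (t : ℝ) :
    HasDerivAt (fun s : ℝ => Matrix.trace (exp (A + s • B) * C))
      (∫ u in (0:ℝ)..1,
        Matrix.trace (exp ((1 - u) • (A + t • B)) * B * exp (u • (A + t • B)) * C)) t := by
  have h2 := (traceMulCLM C).hasFDerivAt.comp_hasDerivAt t (key A B t)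
  have hint : IntervalIntegrable
      (fun u : ℝ => exp ((1 - u) • (A + t • B)) * B * exp (u • (A + t • B))) volume 0 1 :=
    (((cexp1 _).mul continuous_const).mul (cexp2 _)).intervalIntegrable 0 1
  have h3 := (traceMulCLM C).intervalIntegral_comp_comm hint
  rw [← h3] at h2
  exact h2


lemma exp_mul_exp (H : Mat d) (u : ℝ) : exp ((1 - u) • H) * exp (u • H) = exp H := by
  rw [← NormedSpace.exp_add_of_commute (((Commute.refl H).smul_left _).smul_right _),
    ← add_smul]
  norm_num

lemma exp_mul_exp' (H : Mat d) (u : ℝ) : exp (u • H) * exp ((1 - u) • H) = exp H := by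
  rw [← NormedSpace.exp_add_of_commute (((Commute.refl H).smul_left _).smul_right _),
    ← add_smul]
  norm_num

lemma re_hasDerivAt {F : ℝ → ℂ} {c : ℂ} {t : ℝ} (h : HasDerivAt F c t) :
    HasDerivAt (fun s => (F s).re) c.re t :=
  Complex.reCLM.hasFDerivAt.comp_hasDerivAt t h

lemma cont_tr (H B C : Mat d) :
    Continuous fun u : ℝ => Matrix.trace (exp ((1 - u) • H) * B * exp (u • H) * C) :=
  (traceMulCLM C).continuous.comp (((cexp1 H).mul continuous_const).mul (cexp2 H))

lemma bkm_BB_eq {H : Mat d} (hH : H.IsHermitian) (B : Mat d) :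
    bkm H B B
      = (∫ u in (0:ℝ)..1, Matrix.trace (exp ((1 - u) • H) * B * exp (u • H) * B)).re := by
  rw [← Complex.reCLM_apply,
    ← Complex.reCLM.intervalIntegral_comp_comm ((cont_tr H B B).intervalIntegrable 0 1)]
  unfold bkm
  apply intervalIntegral.integral_congr
  intro u _
  simp only [Function.comp_apply, Complex.reCLM_apply]
  rw [mexp_eq (hermitian_smul hH _), mexp_eq (hermitian_smul hH _), ← mul_assoc]

lemma bkm_one_one {H : Mat d} (hH : H.IsHermitian) :
    bkm H 1 1 = (Matrix.trace (exp H)).re := by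
  unfold bkm
  have : ∀ u ∈ Set.uIcc (0:ℝ) 1,
      (fun u : ℝ => (Matrix.trace (mexp ((1 - u) • H) * 1 * (mexp (u • H) * 1))).re) u
        = (Matrix.trace (exp H)).re := by
    intro u _
    simp only [mul_one]
    rw [mexp_eq (hermitian_smul hH _), mexp_eq (hermitian_smul hH _), exp_mul_exp]
  rw [intervalIntegral.integral_congr this, intervalIntegral.integral_const]
  norm_num

lemma bkm_one_B {H : Mat d} (hH : H.IsHermitian) (B : Mat d) :
    bkm H 1 B = (Matrix.trace (exp H * B)).re := by
  unfold bkm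
  have : ∀ u ∈ Set.uIcc (0:ℝ) 1,
      (fun u : ℝ => (Matrix.trace (mexp ((1 - u) • H) * 1 * (mexp (u • H) * B))).re) u
        = (Matrix.trace (exp H * B)).re := by
    intro u _
    simp only [mul_one]
    rw [mexp_eq (hermitian_smul hH _), mexp_eq (hermitian_smul hH _), ← mul_assoc,
      exp_mul_exp]
  rw [intervalIntegral.integral_congr this, intervalIntegral.integral_const]
  norm_num

lemma trace_mexp_pos (hd : 0 < d) {M : Mat d} (hM : M.IsHermitian) :
    0 < (Matrix.trace (mexp M)).re := by
  unfold mexp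
  rw [hM.cfc_eq, Matrix.IsHermitian.cfc, Unitary.conjStarAlgAut_apply, Matrix.trace_mul_cycle,
    Unitary.coe_star_mul_self, one_mul, Matrix.trace_diagonal]
  have : ∀ i : Fin d, ((RCLike.ofReal ∘ Real.exp ∘ hM.eigenvalues) i : ℂ).re
      = Real.exp (hM.eigenvalues i) := fun i => by simp [Complex.exp_ofReal_re]
  rw [Complex.re_sum]
  refine Finset.sum_pos (fun i _ => by rw [this i]; exact Real.exp_pos _) ?_
  exact Finset.univ_nonempty_iff.mpr (Fin.pos_iff_nonempty.mp hd)

lemma hf_deriv (A B : Mat d) (t : ℝ) :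
    HasDerivAt (fun s : ℝ => (Matrix.trace (exp (A + s • B))).re)
      ((Matrix.trace (exp (A + t • B) * B)).re) t := by
  have h := re_hasDerivAt (trace_deriv A B 1 t)
  have hval : (∫ u in (0:ℝ)..1,
      Matrix.trace (exp ((1 - u) • (A + t • B)) * B * exp (u • (A + t • B)) * 1))
        = Matrix.trace (exp (A + t • B) * B) := by
    have : ∀ u ∈ Set.uIcc (0:ℝ) 1,
        (fun u : ℝ => Matrix.trace
            (exp ((1 - u) • (A + t • B)) * B * exp (u • (A + t • B)) * 1)) u
          = Matrix.trace (exp (A + t • B) * B) := by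
      intro u _
      simp only [mul_one]
      rw [Matrix.trace_mul_cycle, exp_mul_exp']
    rw [intervalIntegral.integral_congr this, intervalIntegral.integral_const]
    norm_num
  rw [hval] at h
  simpa using h

lemma hg_deriv (A B : Mat d) (t : ℝ) (hH : (A + t • B).IsHermitian) :
    HasDerivAt (fun s : ℝ => (Matrix.trace (exp (A + s • B) * B)).re)
      (bkm (A + t • B) B B) t := by
  have h := re_hasDerivAt (trace_deriv A B B t)
  rwa [← bkm_BB_eq hH B] at h



/-- `Φ(t) = log tr exp (A + t B)` is twice differentiable, with
`Φ''(t) = (⟨B,B⟩_BKM ⟨I,I⟩_BKM − ⟨I,B⟩_BKM²) / (tr exp H_t)²` where `H_t = A + t B`. -/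
theorem stmt_7 {d : ℕ} (hd : 0 < d) (A B : Mat d)
    (hA : A.IsHermitian) (hB : B.IsHermitian)
    (Φ : ℝ → ℝ) (hΦ : ∀ t : ℝ, Φ t = Real.log ((Matrix.trace (mexp (A + t • B))).re)) :
    (∀ t : ℝ, DifferentiableAt ℝ Φ t) ∧
      ∀ t : ℝ,
        HasDerivAt (deriv Φ)
          ((bkm (A + t • B) B B * bkm (A + t • B) 1 1 - bkm (A + t • B) 1 B ^ 2) /
            ((Matrix.trace (mexp (A + t • B))).re) ^ 2) t := by
  have hHt : ∀ t : ℝ, (A + t • B).IsHermitian := fun t => hA.add (hermitian_smul hB t)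
  have hmexp : ∀ t : ℝ, mexp (A + t • B) = exp (A + t • B) := fun t => mexp_eq (hHt t)
  have hfpos : ∀ t : ℝ, 0 < (Matrix.trace (exp (A + t • B))).re := by
    intro t
    have := trace_mexp_pos hd (hHt t)
    rwa [hmexp t] at this
  have hΦeq : Φ = fun t => Real.log ((Matrix.trace (exp (A + t • B))).re) := by
    funext t
    rw [hΦ t, hmexp t]
  have hΦder : ∀ t : ℝ, HasDerivAt Φ
      (((Matrix.trace (exp (A + t • B))).re)⁻¹
        * (Matrix.trace (exp (A + t • B) * B)).re) t := by
    intro t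
    rw [hΦeq]
    exact (Real.hasDerivAt_log (hfpos t).ne').comp t (hf_deriv A B t)
  constructor
  · exact fun t => (hΦder t).differentiableAt
  · intro t
    have hderiv : deriv Φ = fun s =>
        (Matrix.trace (exp (A + s • B) * B)).re / (Matrix.trace (exp (A + s • B))).re := by
      funext s
      rw [(hΦder s).deriv, div_eq_inv_mul]
    rw [hderiv]
    have h2 := (hg_deriv A B t (hHt t)).div (hf_deriv A B t) (hfpos t).ne'
    refine h2.congr_deriv ?_
    rw [bkm_one_one (hHt t), bkm_one_B (hHt t), hmexp t]
    ring


end aux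

end
end

section
/- For every L > 0, the function g_L : (0,1) → ℝ defined by g_L(x) := L·(x log x + (1−x) log(1−x)) + log x + log(1−x) is not convex on the interval (0,1). (Equivalently: there is no L > 0 such that L·h − f₁ is convex on the relative interior of the probability simplex in ℝ², where h(x,y) = x log x + y log y is the negative entropy and f₁(x,y) = −log x − log y.) -/
set_option maxHeartbeats 1000000 in
/-- for no `L > 0` is
`x ↦ L (x log x + (1-x) log (1-x)) + log x + log (1-x)` convex on `(0,1)`. -/
theorem stmt_18 :
    ∀ L : ℝ, 0 < L →
      ¬ConvexOn ℝ (Set.Ioo (0:ℝ) 1)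
        (fun x : ℝ => L * (x * Real.log x + (1 - x) * Real.log (1 - x)) +
          Real.log x + Real.log (1 - x)) := by
  intro L hL hc
  obtain ⟨t, htdef⟩ : ∃ t : ℝ, t = Real.exp (-3*(L+2) - 1) := ⟨_, rfl⟩
  have ht0 : 0 < t := htdef ▸ Real.exp_pos _
  have hlt : t < Real.exp (-7) := htdef ▸ Real.exp_lt_exp.mpr (by nlinarith)
  have he7 : Real.exp (-7) < 1/4 := by
    have h7 : (4:ℝ) < Real.exp 7 := by
      have := Real.add_one_le_exp (7:ℝ)
      linarith
    have h8 := inv_strictAnti₀ (by norm_num : (0:ℝ) < 4) h7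
    rw [Real.exp_neg]
    norm_num at h8 ⊢
    linarith
  have ht14 : t < 1/4 := lt_trans hlt he7
  have hlogt : Real.log t = -3*(L+2) - 1 := by rw [htdef, Real.log_exp]
  have hd : (0:ℝ) < 3/4 - t := by linarith
  -- apply convexity at points t and 3/4 with weights summing to 1, hitting 1/2
  have key := hc.2 (x := t) (y := (3/4:ℝ)) ⟨ht0, by linarith⟩ ⟨by norm_num, by norm_num⟩
      (show (0:ℝ) ≤ (1/4)/(3/4 - t) by positivity)
      (show (0:ℝ) ≤ (1/2 - t)/(3/4 - t) by apply div_nonneg <;> linarith)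
      (show (1/4)/(3/4 - t) + (1/2 - t)/(3/4 - t) = 1 by
        rw [← add_div, div_eq_one_iff_eq (ne_of_gt hd)]; ring)
  have hmid : ((1/4)/(3/4 - t)) * t + ((1/2 - t)/(3/4 - t)) * (3/4:ℝ) = 1/2 := by
    have h9 : ((1/4)/(3/4 - t)) * t + ((1/2 - t)/(3/4 - t)) * (3/4:ℝ) =
        (1/4 * t + (1/2 - t) * (3/4)) / (3/4 - t) := by ring
    rw [h9, div_eq_iff (ne_of_gt hd)]; ring
  simp only [smul_eq_mul] at key
  rw [hmid] at key
  -- value at 1/2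
  have hhalf : L * ((1/2:ℝ) * Real.log (1/2) + (1 - 1/2) * Real.log (1 - 1/2)) +
      Real.log (1/2) + Real.log (1 - 1/2) = -(L+2) * Real.log 2 := by
    have : Real.log (1/2:ℝ) = -Real.log 2 := by rw [one_div, Real.log_inv]
    norm_num [this]
    ring
  -- bound at t : f t ≤ log t
  have hlt1 : t < 1 := by linarith
  have hft : L * (t * Real.log t + (1 - t) * Real.log (1 - t)) +
      Real.log t + Real.log (1 - t) ≤ Real.log t := by
    have h1 : Real.log t ≤ 0 := Real.log_nonpos (le_of_lt ht0) (le_of_lt hlt1)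
    have h2 : Real.log (1 - t) ≤ 0 := Real.log_nonpos (by linarith) (by linarith)
    nlinarith [mul_nonneg (le_of_lt ht0) (neg_nonneg.mpr h1),
      mul_nonneg (by linarith : (0:ℝ) ≤ 1 - t) (neg_nonneg.mpr h2)]
  -- bound at 3/4 : f (3/4) ≤ 0
  have hf34 : L * ((3/4:ℝ) * Real.log (3/4) + (1 - 3/4) * Real.log (1 - 3/4)) +
      Real.log (3/4) + Real.log (1 - 3/4) ≤ 0 := by
    have h1 : Real.log (3/4:ℝ) ≤ 0 := Real.log_nonpos (by norm_num) (by norm_num)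
    have h2 : Real.log (1 - 3/4:ℝ) ≤ 0 := Real.log_nonpos (by norm_num) (by norm_num)
    nlinarith
  -- weights
  have ha13 : (1/3:ℝ) ≤ (1/4)/(3/4 - t) := by
    rw [le_div_iff₀ hd]; linarith
  have hb0 : (0:ℝ) ≤ (1/2 - t)/(3/4 - t) := by apply div_nonneg <;> linarith
  have ha0 : (0:ℝ) ≤ (1/4)/(3/4 - t) := by positivity
  have hlogt_neg : Real.log t < 0 := by rw [hlogt]; nlinarith
  -- chain of inequalities
  have c1 : ((1/4)/(3/4 - t)) * (L * (t * Real.log t + (1 - t) * Real.log (1 - t)) +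
      Real.log t + Real.log (1 - t)) ≤ ((1/4)/(3/4 - t)) * Real.log t :=
    mul_le_mul_of_nonneg_left hft ha0
  have c2 : ((1/4)/(3/4 - t)) * Real.log t ≤ (1/3) * Real.log t :=
    mul_le_mul_of_nonpos_right ha13 (le_of_lt hlogt_neg)
  have c3 : ((1/2 - t)/(3/4 - t)) * (L * ((3/4:ℝ) * Real.log (3/4) +
      (1 - 3/4) * Real.log (1 - 3/4)) + Real.log (3/4) + Real.log (1 - 3/4)) ≤ 0 :=
    mul_nonpos_of_nonneg_of_nonpos hb0 hf34
  rw [hhalf] at key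
  have hfin : -(L+2) * Real.log 2 ≤ (1/3) * Real.log t := by
    linarith
  rw [hlogt] at hfin
  have hlog2 : Real.log 2 < 1 := by
    nlinarith [Real.log_two_lt_d9]
  nlinarith
end
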